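/- arXiv:2111.00834 — 10 statements merged into one kernel-verified Lean document; each statement's English description precedes it below -/
import Mathlib

section
/- Fix M ≥ 1, a solvent volume v₀ > 0, ionic volumes v_j > 0, valences z_j ∈ ℝ, constants β > 0 and e > 0, and bulk concentrations c_j^∞ > 0 (j = 1,…,M) with Σ_{j=1}^M v_j c_j^∞ < 1; set γ^∞ = 1 − Σ_{j=1}^M v_j c_j^∞. For every ψ ∈ ℝ, the function f(γ) = γ − 1 + Σ_{j=1}^M v_j c_j^∞ (γ/γ^∞)^{v_j/v₀} exp(−β z_j e ψ) has exactly one root γ in the open interval (0, 1). -/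
/-!
Write `γ∞ = 1 - ∑ vⱼ c∞ⱼ`. Each term `vⱼ c∞ⱼ (γ/γ∞)^(vⱼ/v₀) e^(-β zⱼ e ψ)` is a positive multiple of a
positive power of `γ`, hence continuous and nondecreasing on `[0, ∞)`, zero at `γ = 0` and positive at
`γ = 1`. So `f` is continuous and strictly increasing on `[0, 1]` with `f 0 = -1 < 0 < f 1`; the
intermediate value theorem gives a root in `(0, 1)`, and strict monotonicity makes it unique.
-/

open Set

theorem existsUnique_mem_Ioo_eq_zero_of_strictMonoOn {f : ℝ → ℝ} {a b : ℝ} (hab : a ≤ b)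
    (hf : ContinuousOn f (Icc a b)) (hmono : StrictMonoOn f (Icc a b))
    (ha : f a < 0) (hb : 0 < f b) :
    ∃! x, x ∈ Ioo a b ∧ f x = 0 := by
  obtain ⟨x, hx, hfx⟩ := intermediate_value_Ioo hab hf ⟨ha, hb⟩
  refine ⟨x, ⟨hx, hfx⟩, fun y ⟨hy, hfy⟩ => ?_⟩
  exact hmono.injOn (Ioo_subset_Icc_self hy) (Ioo_subset_Icc_self hx) (hfy.trans hfx.symm)

section ScaledPowerSum

variable {ι : Type*} [Fintype ι] (a b p : ι → ℝ) (s : ℝ)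

theorem continuous_sum_mul_div_rpow_mul (hp : ∀ j, 0 ≤ p j) :
    Continuous fun γ => ∑ j, a j * (γ / s) ^ p j * b j :=
  continuous_finsetSum _ fun j _ =>
    (continuous_const.mul ((continuous_id.div_const s).rpow_const fun _ => Or.inr (hp j))).mul
      continuous_const

theorem monotoneOn_sum_mul_div_rpow_mul (ha : ∀ j, 0 ≤ a j) (hb : ∀ j, 0 ≤ b j) (hs : 0 < s)
    (hp : ∀ j, 0 ≤ p j) :
    MonotoneOn (fun γ => ∑ j, a j * (γ / s) ^ p j * b j) (Ici 0) := by
  refine MonotoneOn.finsetSum fun j _ x hx y _ hxy => ?_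
  have := ha j; have := hb j
  gcongr
  exacts [div_nonneg hx hs.le, hp j]

theorem sum_mul_div_rpow_mul_pos [Nonempty ι] (ha : ∀ j, 0 < a j) (hb : ∀ j, 0 < b j)
    {γ : ℝ} (hγ : 0 < γ) (hs : 0 < s) :
    0 < ∑ j, a j * (γ / s) ^ p j * b j :=
  Finset.sum_pos (fun j _ => by have := ha j; have := hb j; positivity) Finset.univ_nonempty

end ScaledPowerSum

theorem unique_root_solvent_fraction_general
    (M : ℕ) (hM : 1 ≤ M) (v₀ : ℝ) (hv₀ : 0 < v₀)
    (v z cinf : Fin M → ℝ) (hv : ∀ j, 0 < v j)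
    (β e : ℝ)
    (hcinf : ∀ j, 0 < cinf j) (hsum : ∑ j, v j * cinf j < 1) (ψ : ℝ) :
    ∃! γ : ℝ, γ ∈ Set.Ioo (0 : ℝ) 1 ∧
      γ - 1 + ∑ j, v j * cinf j * (γ / (1 - ∑ i, v i * cinf i)) ^ (v j / v₀) *
        Real.exp (-(β * z j * e * ψ)) = 0 := by
  have : Nonempty (Fin M) := ⟨⟨0, hM⟩⟩
  have hs : 0 < 1 - ∑ i, v i * cinf i := sub_pos.2 hsum
  have hp : ∀ j, 0 < v j / v₀ := fun j => div_pos (hv j) hv₀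
  have ha : ∀ j, 0 < v j * cinf j := fun j => mul_pos (hv j) (hcinf j)
  have hb : ∀ j, 0 < Real.exp (-(β * z j * e * ψ)) := fun j => Real.exp_pos _
  apply existsUnique_mem_Ioo_eq_zero_of_strictMonoOn zero_le_one
  · exact ((continuous_id.sub continuous_const).add
      (continuous_sum_mul_div_rpow_mul _ _ _ _ fun j => (hp j).le)).continuousOn
  · exact ((strictMono_id.add_const (-1)).strictMonoOn _).add_monotone
      ((monotoneOn_sum_mul_div_rpow_mul _ _ _ _ (fun j => (ha j).le) (fun j => (hb j).le) hs
        fun j => (hp j).le).mono Icc_subset_Ici_self)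
  · simp [Real.zero_rpow (hp _).ne']
  · linarith [sum_mul_div_rpow_mul_pos _ _ (fun j => v j / v₀) _ ha hb one_pos hs]

/-- For every `ψ : ℝ`, the function
`f(γ) = γ − 1 + ∑ j, v j * c∞ j * (γ/γ∞)^(v j / v₀) * exp(−β z_j e ψ)`
has exactly one root `γ` in the open interval `(0, 1)`. -/
theorem unique_root_solvent_fraction
    (M : ℕ) (hM : 1 ≤ M) (v₀ : ℝ) (hv₀ : 0 < v₀)
    (v z cinf : Fin M → ℝ) (hv : ∀ j, 0 < v j)
    (β e : ℝ) (hβ : 0 < β) (he : 0 < e)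
    (hcinf : ∀ j, 0 < cinf j) (hsum : ∑ j, v j * cinf j < 1) (ψ : ℝ) :
    ∃! γ : ℝ, γ ∈ Set.Ioo (0 : ℝ) 1 ∧
      γ - 1 + ∑ j, v j * cinf j * (γ / (1 - ∑ i, v i * cinf i)) ^ (v j / v₀) *
        Real.exp (-(β * z j * e * ψ)) = 0 :=
  unique_root_solvent_fraction_general M hM v₀ hv₀ v z cinf hv β e hcinf hsum ψ
end

section
/- Fix M ≥ 1, v₀ > 0, ionic volumes v_j > 0, valences z_j ∈ ℝ, β > 0, e > 0, bulk concentrations c_j^∞ > 0 with γ^∞ := 1 − Σ_{j=1}^M v_j c_j^∞ ∈ (0,1), and ψ ∈ ℝ. Then the function f(γ) = γ − 1 + Σ_{j=1}^M v_j c_j^∞ (γ/γ^∞)^{v_j/v₀} exp(−β z_j e ψ) is strictly monotonically increasing on [0, ∞), with f(0) = −1 < 0 and f(1) > 0. -/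
open Set

section WeightedPowerSum

variable {ι : Type*} [Fintype ι] {a w p : ι → ℝ} {G : ℝ}

lemma monotoneOn_sum_mul_rpow_div_mul (ha : ∀ j, 0 ≤ a j) (hw : ∀ j, 0 ≤ w j)
    (hp : ∀ j, 0 ≤ p j) (hG : 0 ≤ G) :
    MonotoneOn (fun γ => ∑ j, a j * (γ / G) ^ p j * w j) (Ici 0) :=
  fun x hx _ _ hxy => Finset.sum_le_sum fun j _ => by
    have : 0 ≤ x / G := div_nonneg hx hG
    have := ha j; have := hw j; have := hp j
    gcongr

lemma sum_mul_zero_rpow_mul (hp : ∀ j, 0 < p j) :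
    ∑ j, a j * (0 / G) ^ p j * w j = 0 :=
  Finset.sum_eq_zero fun j _ => by rw [zero_div, Real.zero_rpow (hp j).ne', mul_zero, zero_mul]

lemma sum_mul_rpow_mul_pos [Nonempty ι] (ha : ∀ j, 0 < a j) (hw : ∀ j, 0 < w j) {x : ℝ}
    (hx : 0 < x) : 0 < ∑ j, a j * x ^ p j * w j :=
  Finset.sum_pos (fun j _ => by have := ha j; have := hw j; positivity) Finset.univ_nonempty

end WeightedPowerSum

theorem strictMono_solvent_fraction_fn_general
    (M : ℕ) (hM : 1 ≤ M) (v₀ : ℝ) (hv₀ : 0 < v₀)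
    (v z cinf : Fin M → ℝ) (hv : ∀ j, 0 < v j)
    (β e : ℝ)
    (hcinf : ∀ j, 0 < cinf j) (hsum : ∑ j, v j * cinf j < 1) (ψ : ℝ)
    (f : ℝ → ℝ)
    (hf : ∀ γ : ℝ, f γ =
      γ - 1 + ∑ j, v j * cinf j * (γ / (1 - ∑ i, v i * cinf i)) ^ (v j / v₀) *
        Real.exp (-(β * z j * e * ψ))) :
    StrictMonoOn f (Set.Ici (0 : ℝ)) ∧ f 0 = -1 ∧ f 0 < 0 ∧ 0 < f 1 := by
  have : NeZero M := ⟨by omega⟩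
  have hG : 0 < 1 - ∑ i, v i * cinf i := sub_pos.mpr hsum
  have hweight j : 0 < v j * cinf j := mul_pos (hv j) (hcinf j)
  have hexp j : 0 < v j / v₀ := div_pos (hv j) hv₀
  have hf0 : f 0 = -1 := by
    rw [hf, sum_mul_zero_rpow_mul hexp]
    norm_num
  refine ⟨fun x hx y hy hxy => ?_, hf0, by rw [hf0]; norm_num, ?_⟩
  · have := (strictMono_id.add_const (-1 : ℝ)).strictMonoOn (Ici 0) |>.add_monotone
      (monotoneOn_sum_mul_rpow_div_mul (fun j => (hweight j).le)
        (fun j => (Real.exp_pos (-(β * z j * e * ψ))).le) (fun j => (hexp j).le) hG.le)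
    simpa only [hf, id, ← sub_eq_add_neg] using this hx hy hxy
  · rw [hf]
    simpa using sum_mul_rpow_mul_pos (p := fun j => v j / v₀) hweight
      (fun j => Real.exp_pos (-(β * z j * e * ψ))) (one_div_pos.mpr hG)

/-- The function
`f(γ) = γ − 1 + ∑ j, v j * c∞ j * (γ/γ∞)^(v j / v₀) * exp(−β z_j e ψ)`
is strictly monotonically increasing on `[0, ∞)`, with `f(0) = −1 < 0` and `f(1) > 0`. -/
theorem strictMono_solvent_fraction_fn
    (M : ℕ) (hM : 1 ≤ M) (v₀ : ℝ) (hv₀ : 0 < v₀)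
    (v z cinf : Fin M → ℝ) (hv : ∀ j, 0 < v j)
    (β e : ℝ) (hβ : 0 < β) (he : 0 < e)
    (hcinf : ∀ j, 0 < cinf j) (hsum : ∑ j, v j * cinf j < 1) (ψ : ℝ)
    (f : ℝ → ℝ)
    (hf : ∀ γ : ℝ, f γ =
      γ - 1 + ∑ j, v j * cinf j * (γ / (1 - ∑ i, v i * cinf i)) ^ (v j / v₀) *
        Real.exp (-(β * z j * e * ψ))) :
    StrictMonoOn f (Set.Ici (0 : ℝ)) ∧ f 0 = -1 ∧ f 0 < 0 ∧ 0 < f 1 :=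
  strictMono_solvent_fraction_fn_general M hM v₀ hv₀ v z cinf hv β e hcinf hsum ψ f hf
end

section
/- (Theorem 3.1, existence, uniqueness and boundness of the generalized Boltzmann distribution.) Fix M ≥ 1, v₀ > 0, ionic volumes v_i > 0, valences z_i ∈ ℝ, β > 0, e > 0, and bulk concentrations c_i^∞ > 0 (i = 1,…,M) with γ^∞ := 1 − Σ_{j=1}^M v_j c_j^∞ ∈ (0,1). Then for every ψ ∈ ℝ there exists a unique vector (c_1,…,c_M) with c_i > 0 for all i and 1 − Σ_{j=1}^M v_j c_j > 0 satisfying the equilibrium conditions β z_i e ψ + log(c_i/c_i^∞) − (v_i/v₀) log((1 − Σ_{j=1}^M v_j c_j)/γ^∞) = 0 for all i = 1,…,M; moreover this unique solution satisfies 0 < c_i < 1/v_i for every i and 1 − Σ_{j=1}^M v_j c_j < 1. -/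
/-!
Writing `t = log (γ / γ^∞)` for the logarithm of the relative void fraction, the equilibrium
conditions say exactly that `cᵢ = cᵢ^∞ exp (-β zᵢ e ψ) exp ((vᵢ / v₀) t)`, subject to the single
scalar constraint `γ^∞ eᵗ + ∑ⱼ vⱼ cⱼ = 1`. The left-hand side of that constraint is a strictly
increasing continuous function of `t` which tends to `0` at `-∞` and is at least `γ^∞ eᵗ`, so it
takes the value `1` exactly once.
-/

open Real Filter Topology Finset

section ExpSum

variable {ι : Type*} [Fintype ι] {γ : ℝ} {a k : ι → ℝ}

lemma strictMono_exp_add_sum_exp (hγ : 0 < γ) (ha : ∀ j, 0 ≤ a j) (hk : ∀ j, 0 ≤ k j) :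
    StrictMono fun t => γ * exp t + ∑ j, a j * exp (k j * t) := by
  refine StrictMono.add_monotone (fun s t hst => by gcongr) fun s t hst => ?_
  gcongr with j
  · exact ha j
  · exact hk j

lemma tendsto_exp_add_sum_exp_atBot (hk : ∀ j, 0 < k j) :
    Tendsto (fun t => γ * exp t + ∑ j, a j * exp (k j * t)) atBot (𝓝 0) := by
  have h : Tendsto (fun t => γ * exp t + ∑ j, a j * exp (k j * t)) atBot
      (𝓝 (γ * 0 + ∑ j, a j * 0)) :=
    (tendsto_exp_atBot.const_mul γ).add <| tendsto_finsetSum _ fun j _ =>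
      (tendsto_exp_atBot.comp (tendsto_id.const_mul_atBot (hk j))).const_mul (a j)
  simpa using h

lemma existsUnique_exp_add_sum_exp_eq (hγ : 0 < γ) (ha : ∀ j, 0 ≤ a j) (hk : ∀ j, 0 < k j)
    {y : ℝ} (hy : 0 < y) : ∃! t, γ * exp t + ∑ j, a j * exp (k j * t) = y := by
  obtain ⟨t₁, ht₁⟩ := ((tendsto_exp_add_sum_exp_atBot (γ := γ) (a := a) hk).eventually
    (gt_mem_nhds hy)).exists
  have ht₂ : y ≤ γ * exp (log (y / γ)) + ∑ j, a j * exp (k j * log (y / γ)) := by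
    have hfirst : γ * exp (log (y / γ)) = y := by
      rw [exp_log (by positivity)]
      field_simp
    have hrest : 0 ≤ ∑ j, a j * exp (k j * log (y / γ)) :=
      sum_nonneg fun j _ => mul_nonneg (ha j) (exp_pos _).le
    linarith
  obtain ⟨t, ht⟩ := intermediate_value_univ t₁ (log (y / γ))
    (f := fun t => γ * exp t + ∑ j, a j * exp (k j * t)) (by fun_prop) ⟨ht₁.le, ht₂⟩
  exact ⟨t, ht, fun s hs =>
    (strictMono_exp_add_sum_exp hγ ha fun j => (hk j).le).injective (hs.trans ht.symm)⟩

end ExpSum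

section Equilibrium

variable {ι : Type*} [Fintype ι] (v₀ : ℝ) (v u cinf : ι → ℝ)

def voidFraction (c : ι → ℝ) : ℝ := 1 - ∑ j, v j * c j

/-- The equilibrium conditions, with `u i` standing for the reduced energy `β zᵢ e ψ`. -/
def IsBoltzmannEquilibrium (c : ι → ℝ) : Prop :=
  (∀ i, 0 < c i) ∧ 0 < voidFraction v c ∧
    ∀ i, u i + log (c i / cinf i) - v i / v₀ * log (voidFraction v c / voidFraction v cinf) = 0

noncomputable def boltzmannProfile (t : ℝ) (i : ι) : ℝ := cinf i * exp (-u i) * exp (v i / v₀ * t)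

variable {v₀ v u cinf}

lemma isBoltzmannEquilibrium_iff (hcinf : ∀ i, 0 < cinf i) (hγ : 0 < voidFraction v cinf)
    {c : ι → ℝ} :
    IsBoltzmannEquilibrium v₀ v u cinf c ↔
      ∃ t, c = boltzmannProfile v₀ v u cinf t ∧ voidFraction v c = voidFraction v cinf * exp t := by
  constructor
  · rintro ⟨hc, hγc, heq⟩
    refine ⟨log (voidFraction v c / voidFraction v cinf), funext fun i => ?_, ?_⟩
    · have hlog : log (c i / cinf i) =
          -u i + v i / v₀ * log (voidFraction v c / voidFraction v cinf) := by
        linarith [heq i]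
      rw [boltzmannProfile, mul_assoc, ← exp_add, ← hlog, exp_log (div_pos (hc i) (hcinf i))]
      field_simp [(hcinf i).ne']
    · rw [exp_log (div_pos hγc hγ)]
      field_simp
  · rintro ⟨t, rfl, hvoid⟩
    refine ⟨fun i => by unfold boltzmannProfile; have := hcinf i; positivity,
      hvoid ▸ by positivity, fun i => ?_⟩
    rw [hvoid, mul_div_cancel_left₀ _ hγ.ne', log_exp, boltzmannProfile, mul_assoc,
      mul_div_cancel_left₀ _ (hcinf i).ne', ← exp_add, log_exp]
    ring

lemma existsUnique_isBoltzmannEquilibrium (hv₀ : 0 < v₀) (hv : ∀ i, 0 < v i)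
    (hcinf : ∀ i, 0 < cinf i) (hγ : 0 < voidFraction v cinf) :
    ∃! c, IsBoltzmannEquilibrium v₀ v u cinf c := by
  have hconstraint : ∀ t, voidFraction v (boltzmannProfile v₀ v u cinf t) =
        voidFraction v cinf * exp t ↔
      voidFraction v cinf * exp t +
        ∑ j, v j * (cinf j * exp (-u j)) * exp (v j / v₀ * t) = 1 := by
    intro t
    simp only [voidFraction, boltzmannProfile, mul_assoc]
    constructor <;> intro h <;> linarith
  obtain ⟨t, ht, ht_unique⟩ := existsUnique_exp_add_sum_exp_eq hγ
    (fun j => (mul_pos (hv j) (mul_pos (hcinf j) (exp_pos _))).le)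
    (fun j => div_pos (hv j) hv₀) one_pos
  refine ⟨boltzmannProfile v₀ v u cinf t,
    (isBoltzmannEquilibrium_iff hcinf hγ).2 ⟨t, rfl, (hconstraint t).2 ht⟩, fun c hc => ?_⟩
  obtain ⟨s, rfl, hs⟩ := (isBoltzmannEquilibrium_iff hcinf hγ).1 hc
  rw [ht_unique s ((hconstraint s).1 hs)]

namespace IsBoltzmannEquilibrium

variable {c : ι → ℝ}

lemma lt_one_div (hv : ∀ i, 0 < v i) (hc : IsBoltzmannEquilibrium v₀ v u cinf c) (i : ι) :
    c i < 1 / v i := by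
  have hle : v i * c i ≤ ∑ j, v j * c j :=
    single_le_sum (fun j _ => (mul_pos (hv j) (hc.1 j)).le) (mem_univ i)
  rw [lt_div_iff₀ (hv i)]
  linarith [hc.2.1, show voidFraction v c = 1 - ∑ j, v j * c j from rfl]

lemma voidFraction_lt_one [Nonempty ι] (hv : ∀ i, 0 < v i)
    (hc : IsBoltzmannEquilibrium v₀ v u cinf c) : voidFraction v c < 1 :=
  sub_lt_self 1 (sum_pos (fun j _ => mul_pos (hv j) (hc.1 j)) univ_nonempty)

end IsBoltzmannEquilibrium

end Equilibrium

theorem generalized_Boltzmann_exists_unique_bounded_general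
    (M : ℕ) (hM : 1 ≤ M) (v₀ : ℝ) (hv₀ : 0 < v₀)
    (v z cinf : Fin M → ℝ) (hv : ∀ i, 0 < v i)
    (β e : ℝ)
    (hcinf : ∀ i, 0 < cinf i) (hsum : ∑ j, v j * cinf j < 1) (ψ : ℝ) :
    (∃! c : Fin M → ℝ,
      (∀ i, 0 < c i) ∧ 0 < 1 - ∑ j, v j * c j ∧
      ∀ i, β * z i * e * ψ + Real.log (c i / cinf i) -
        v i / v₀ * Real.log ((1 - ∑ j, v j * c j) / (1 - ∑ j, v j * cinf j)) = 0) ∧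
    (∀ c : Fin M → ℝ,
      ((∀ i, 0 < c i) ∧ 0 < 1 - ∑ j, v j * c j ∧
       ∀ i, β * z i * e * ψ + Real.log (c i / cinf i) -
         v i / v₀ * Real.log ((1 - ∑ j, v j * c j) / (1 - ∑ j, v j * cinf j)) = 0) →
      (∀ i, 0 < c i ∧ c i < 1 / v i) ∧ 1 - ∑ j, v j * c j < 1) := by
  have : Nonempty (Fin M) := ⟨⟨0, hM⟩⟩
  let u : Fin M → ℝ := fun i => β * z i * e * ψ
  refine ⟨existsUnique_isBoltzmannEquilibrium (u := u) hv₀ hv hcinf (sub_pos.2 hsum),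
    fun c hc => ?_⟩
  have hc : IsBoltzmannEquilibrium v₀ v u cinf c := hc
  exact ⟨fun i => ⟨hc.1 i, hc.lt_one_div hv i⟩, hc.voidFraction_lt_one hv⟩

/-- Theorem 3.1, existence, uniqueness and boundness of the generalized
Boltzmann distribution: for every `ψ ∈ ℝ` there exists a unique vector `(c₁,…,c_M)`
with `cᵢ > 0` and `1 − ∑ vⱼ cⱼ > 0` satisfying the equilibrium conditions
`β zᵢ e ψ + log(cᵢ/cᵢ^∞) − (vᵢ/v₀) log((1 − ∑ vⱼ cⱼ)/γ^∞) = 0` for all `i`;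
moreover this unique solution satisfies `0 < cᵢ < 1/vᵢ` and `1 − ∑ vⱼ cⱼ < 1`. -/
theorem generalized_Boltzmann_exists_unique_bounded
    (M : ℕ) (hM : 1 ≤ M) (v₀ : ℝ) (hv₀ : 0 < v₀)
    (v z cinf : Fin M → ℝ) (hv : ∀ i, 0 < v i)
    (β e : ℝ) (hβ : 0 < β) (he : 0 < e)
    (hcinf : ∀ i, 0 < cinf i) (hsum : ∑ j, v j * cinf j < 1) (ψ : ℝ) :
    (∃! c : Fin M → ℝ,
      (∀ i, 0 < c i) ∧ 0 < 1 - ∑ j, v j * c j ∧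
      ∀ i, β * z i * e * ψ + Real.log (c i / cinf i) -
        v i / v₀ * Real.log ((1 - ∑ j, v j * c j) / (1 - ∑ j, v j * cinf j)) = 0) ∧
    (∀ c : Fin M → ℝ,
      ((∀ i, 0 < c i) ∧ 0 < 1 - ∑ j, v j * c j ∧
       ∀ i, β * z i * e * ψ + Real.log (c i / cinf i) -
         v i / v₀ * Real.log ((1 - ∑ j, v j * c j) / (1 - ∑ j, v j * cinf j)) = 0) →
      (∀ i, 0 < c i ∧ c i < 1 / v i) ∧ 1 - ∑ j, v j * c j < 1) :=
  generalized_Boltzmann_exists_unique_bounded_general M hM v₀ hv₀ v z cinf hv β e hcinf hsum ψ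
end

section
/- (Smoothness of the solvent volume fraction.) Fix M ≥ 1, v₀ > 0, ionic volumes v_j > 0, valences z_j ∈ ℝ, β > 0, e > 0, and bulk concentrations c_j^∞ > 0 with γ^∞ := 1 − Σ_{j=1}^M v_j c_j^∞ ∈ (0,1). Let γ : ℝ → ℝ be the function which assigns to each ψ ∈ ℝ the unique root in (0,1) of f_ψ(γ) = γ − 1 + Σ_{j=1}^M v_j c_j^∞ (γ/γ^∞)^{v_j/v₀} exp(−β z_j e ψ). Then γ is infinitely differentiable (C^∞) on ℝ. -/
open scoped BigOperators

/-- smoothness of the solvent volume fraction: the function `γ : ℝ → ℝ`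
assigning to each `ψ` the unique root in `(0,1)` of
`f_ψ(γ) = γ − 1 + ∑ j, v j c_j^∞ (γ/γ^∞)^(v j/v₀) exp(−β z_j e ψ)`
is infinitely differentiable on `ℝ`. -/
theorem solvent_fraction_smooth
    (M : ℕ) (hM : 1 ≤ M) (v₀ : ℝ) (hv₀ : 0 < v₀)
    (v z cinf : Fin M → ℝ) (hv : ∀ j, 0 < v j)
    (β e : ℝ) (hβ : 0 < β) (he : 0 < e)
    (hcinf : ∀ j, 0 < cinf j) (hsum : ∑ j, v j * cinf j < 1)
    (γ : ℝ → ℝ)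
    (hroot : ∀ ψ : ℝ, γ ψ ∈ Set.Ioo (0 : ℝ) 1 ∧
      γ ψ - 1 + ∑ j, v j * cinf j * (γ ψ / (1 - ∑ i, v i * cinf i)) ^ (v j / v₀) *
        Real.exp (-(β * z j * e * ψ)) = 0)
    (huniq : ∀ ψ x : ℝ, x ∈ Set.Ioo (0 : ℝ) 1 →
      x - 1 + ∑ j, v j * cinf j * (x / (1 - ∑ i, v i * cinf i)) ^ (v j / v₀) *
        Real.exp (-(β * z j * e * ψ)) = 0 → x = γ ψ) :
    ContDiff ℝ (⊤ : ℕ∞) γ := by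
  set gb : ℝ := 1 - ∑ i, v i * cinf i with hgbdef
  have hgb : 0 < gb := sub_pos.mpr hsum
  set F : ℝ × ℝ → ℝ := fun p => p.2 - 1 + ∑ j, v j * cinf j * (p.2 / gb) ^ (v j / v₀) *
        Real.exp (-(β * z j * e * p.1)) with hFdef
  have hFsmooth : ∀ p : ℝ × ℝ, 0 < p.2 → ContDiffAt ℝ (⊤ : ℕ∞) F p := by
    intro p hp
    apply ContDiffAt.add
    · exact contDiffAt_snd.sub contDiffAt_const
    · apply ContDiffAt.sum
      intro j _
      apply ContDiffAt.mul
      · apply ContDiffAt.mul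
        · exact contDiffAt_const
        · exact (contDiffAt_snd.div_const gb).rpow_const_of_ne
            (ne_of_gt (div_pos hp hgb))
      · exact Real.contDiff_exp.contDiffAt.comp p
          ((contDiffAt_const.mul contDiffAt_fst).neg)
  rw [contDiff_iff_contDiffAt]
  intro ψ₀
  obtain ⟨hx₀mem, hx₀root⟩ := hroot ψ₀
  set x₀ := γ ψ₀ with hx₀def
  have hx0pos : 0 < x₀ := hx₀mem.1
  -- derivative of x ↦ F (ψ₀, x) at x₀
  set b : ℝ := 1 + ∑ j, v j * cinf j *
      ((v j / v₀) * (x₀ / gb) ^ (v j / v₀ - 1) * (1 / gb)) *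
      Real.exp (-(β * z j * e * ψ₀)) with hbdef
  have hg : HasDerivAt (fun x : ℝ => F (ψ₀, x)) b x₀ := by
    have h1 : HasDerivAt (fun x : ℝ => x - 1) 1 x₀ := (hasDerivAt_id x₀).sub_const 1
    have h2 : HasDerivAt (fun x : ℝ => ∑ j, v j * cinf j * (x / gb) ^ (v j / v₀) *
        Real.exp (-(β * z j * e * ψ₀)))
        (∑ j, v j * cinf j * ((v j / v₀) * (x₀ / gb) ^ (v j / v₀ - 1) * (1 / gb)) *
          Real.exp (-(β * z j * e * ψ₀))) x₀ := by
      apply HasDerivAt.fun_sum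
      intro j _
      have hdiv : HasDerivAt (fun x : ℝ => x / gb) (1 / gb) x₀ := by
        simpa using (hasDerivAt_id x₀).div_const gb
      have hr : HasDerivAt (fun y : ℝ => y ^ (v j / v₀))
          ((v j / v₀) * (x₀ / gb) ^ (v j / v₀ - 1)) (x₀ / gb) :=
        Real.hasDerivAt_rpow_const (Or.inl (ne_of_gt (div_pos hx0pos hgb)))
      have h3 := hr.comp x₀ hdiv
      have h4 := (h3.const_mul (v j * cinf j)).mul_const (Real.exp (-(β * z j * e * ψ₀)))
      exact h4
    have := (h1.fun_add h2)
    simp only [hFdef]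
    convert this using 1
  have hbpos : 0 < b := by
    rw [hbdef]
    have : (0:ℝ) ≤ ∑ j, v j * cinf j *
        ((v j / v₀) * (x₀ / gb) ^ (v j / v₀ - 1) * (1 / gb)) *
        Real.exp (-(β * z j * e * ψ₀)) := by
      apply Finset.sum_nonneg
      intro j _
      have h1 : (0:ℝ) < (x₀ / gb) ^ (v j / v₀ - 1) :=
        Real.rpow_pos_of_pos (div_pos hx0pos hgb) _
      have := hv j; have := hcinf j; have := (Real.exp_pos (-(β * z j * e * ψ₀)))
      positivity
    linarith
  -- total derivative of F
  have hFc : ContDiffAt ℝ (⊤ : ℕ∞) F (ψ₀, x₀) := hFsmooth _ hx0pos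
  have hFd : DifferentiableAt ℝ F (ψ₀, x₀) := hFc.differentiableAt (by simp)
  set A := fderiv ℝ F (ψ₀, x₀) with hAdef
  have hA : HasFDerivAt F A (ψ₀, x₀) := hFd.hasFDerivAt
  have hι : HasDerivAt (fun x : ℝ => ((ψ₀ : ℝ), x)) ((0:ℝ), (1:ℝ)) x₀ :=
    (hasDerivAt_const x₀ ψ₀).prodMk (hasDerivAt_id x₀)
  have hAb : A (0, 1) = b := by
    have := hA.comp_hasDerivAt x₀ hι
    exact this.unique hg
  have hbne : A (0, 1) ≠ 0 := by rw [hAb]; exact ne_of_gt hbpos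
  have hAsplit : ∀ s t : ℝ, A (s, t) = A (s, 0) + t * A (0, 1) := by
    intro s t
    have h : (s, t) = ((s, 0) : ℝ × ℝ) + t • ((0:ℝ), (1:ℝ)) := by
      simp [Prod.ext_iff]
    rw [h, map_add, map_smul, smul_eq_mul]
  -- the linear equivalence
  set L : (ℝ × ℝ) ≃ₗ[ℝ] (ℝ × ℝ) :=
    { toFun := fun p => (p.1, A p)
      invFun := fun q => (q.1, (q.2 - A (q.1, 0)) / A (0, 1))
      map_add' := by intro p q; simp [Prod.ext_iff, map_add]
      map_smul' := by intro c p; simp [Prod.ext_iff, map_smul]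
      left_inv := by
        intro p
        have : A p = A (p.1, 0) + p.2 * A (0, 1) := by
          rw [← hAsplit]
        simp [Prod.ext_iff, this]
        field_simp
      right_inv := by
        intro q
        have : A (q.1, (q.2 - A (q.1, 0)) / A (0, 1)) =
            A (q.1, 0) + ((q.2 - A (q.1, 0)) / A (0, 1)) * A (0, 1) := hAsplit _ _
        simp [Prod.ext_iff, this]
        field_simp
        ring } with hLdef
  set L' : (ℝ × ℝ) ≃L[ℝ] (ℝ × ℝ) := L.toContinuousLinearEquiv with hL'def
  set G : ℝ × ℝ → ℝ × ℝ := fun p => (p.1, F p) with hGdef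
  have hG : ContDiffAt ℝ (⊤ : ℕ∞) G (ψ₀, x₀) := contDiffAt_fst.prodMk hFc
  have hG' : HasFDerivAt G (L' : (ℝ × ℝ) →L[ℝ] (ℝ × ℝ)) (ψ₀, x₀) := by
    have h := (hasFDerivAt_fst (𝕜 := ℝ) (E := ℝ) (F := ℝ)).prodMk hA
    exact h
  set H : ℝ × ℝ → ℝ × ℝ := hG.localInverse hG' (by simp) with hHdef
  have hGa : G (ψ₀, x₀) = (ψ₀, 0) := by
    simp only [hGdef]
    exact Prod.ext rfl hx₀root
  have hHsmooth : ContDiffAt ℝ (⊤ : ℕ∞) H (ψ₀, 0) := by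
    rw [← hGa]; exact hG.to_localInverse hG' (by simp)
  have hH0 : H (ψ₀, 0) = (ψ₀, x₀) := by
    rw [← hGa]; exact hG.localInverse_apply_image hG' (by simp)
  have hrinv : ∀ᶠ q in nhds ((ψ₀ : ℝ), (0:ℝ)), G (H q) = q := by
    rw [← hGa]
    exact (hG.hasStrictFDerivAt' hG' (by simp)).eventually_right_inverse
  -- pull back along ψ ↦ (ψ, 0)
  have hcι : ContinuousAt (fun ψ : ℝ => ((ψ : ℝ), (0:ℝ))) ψ₀ :=
    (continuous_id.prodMk continuous_const).continuousAt
  have hev1 : ∀ᶠ ψ in nhds ψ₀, G (H (ψ, 0)) = (ψ, 0) := by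
    have := hcι.tendsto.eventually hrinv
    simpa using this
  have hφcont : ContinuousAt (fun ψ : ℝ => H (ψ, 0)) ψ₀ :=
    ContinuousAt.comp (g := H) (f := fun ψ : ℝ => ((ψ : ℝ), (0:ℝ))) hHsmooth.continuousAt hcι
  have hev2 : ∀ᶠ ψ in nhds ψ₀, (H (ψ, 0)).2 ∈ Set.Ioo (0:ℝ) 1 := by
    have hmem : (H (ψ₀, 0)).2 ∈ Set.Ioo (0:ℝ) 1 := by rw [hH0]; exact hx₀mem
    exact (continuousAt_snd.comp hφcont).eventually_mem (isOpen_Ioo.mem_nhds hmem)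
  have hev : ∀ᶠ ψ in nhds ψ₀, γ ψ = (H (ψ, 0)).2 := by
    filter_upwards [hev1, hev2] with ψ h1 h2
    have hfst : (H (ψ, 0)).1 = ψ := congrArg Prod.fst h1
    have hF0 : F (H (ψ, 0)) = 0 := congrArg Prod.snd h1
    have hpair : ((ψ : ℝ), (H (ψ, 0)).2) = H (ψ, 0) := Prod.ext_iff.mpr ⟨hfst.symm, rfl⟩
    have : F (ψ, (H (ψ, 0)).2) = 0 := by rw [hpair]; exact hF0
    exact (huniq ψ _ h2 this).symm
  have hsmooth2 : ContDiffAt ℝ (⊤ : ℕ∞) (fun ψ : ℝ => (H (ψ, 0)).2) ψ₀ := by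
    have h1 : ContDiffAt ℝ (⊤ : ℕ∞) (fun ψ : ℝ => ((ψ : ℝ), (0:ℝ))) ψ₀ :=
      contDiffAt_id.prodMk contDiffAt_const
    exact contDiffAt_snd.comp _ (hHsmooth.comp ψ₀ h1)
  exact hsmooth2.congr_of_eventuallyEq hev
end

section
/- (Theorem 3.1, smoothness of the generalized Boltzmann distributions.) Fix M ≥ 1, v₀ > 0, ionic volumes v_i > 0, valences z_i ∈ ℝ, β > 0, e > 0, and bulk concentrations c_i^∞ > 0 with γ^∞ := 1 − Σ_{j=1}^M v_j c_j^∞ ∈ (0,1). Let γ : ℝ → (0,1) be the unique-root function of the equation γ − 1 + Σ_{j=1}^M v_j c_j^∞ (γ/γ^∞)^{v_j/v₀} exp(−β z_j e ψ) = 0, and define B_i(ψ) = c_i^∞ (γ(ψ)/γ^∞)^{v_i/v₀} exp(−β z_i e ψ). Then each B_i : ℝ → ℝ is infinitely differentiable (C^∞), and 0 < B_i(ψ) < 1/v_i for every ψ ∈ ℝ. -/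
open scoped BigOperators
open Filter Topology

private lemma gamma_smooth_aux
    (M : ℕ) (v₀ : ℝ) (hv₀ : 0 < v₀)
    (v z cinf : Fin M → ℝ) (hv : ∀ i, 0 < v i)
    (β e : ℝ)
    (hcinf : ∀ i, 0 < cinf i) (hsum : ∑ j, v j * cinf j < 1)
    (γ : ℝ → ℝ)
    (hroot : ∀ ψ : ℝ, γ ψ ∈ Set.Ioo (0 : ℝ) 1 ∧
      γ ψ - 1 + ∑ j, v j * cinf j * (γ ψ / (1 - ∑ i, v i * cinf i)) ^ (v j / v₀) *
        Real.exp (-(β * z j * e * ψ)) = 0)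
    (huniq : ∀ ψ x : ℝ, x ∈ Set.Ioo (0 : ℝ) 1 →
      x - 1 + ∑ j, v j * cinf j * (x / (1 - ∑ i, v i * cinf i)) ^ (v j / v₀) *
        Real.exp (-(β * z j * e * ψ)) = 0 → x = γ ψ) :
    ContDiff ℝ (⊤ : ℕ∞) γ := by
  set G : ℝ := 1 - ∑ i, v i * cinf i with hG
  have hGpos : 0 < G := sub_pos.mpr hsum
  rw [contDiff_iff_contDiffAt]
  intro ψ₀
  obtain ⟨⟨hx₀0, hx₀1⟩, hx₀eq⟩ := hroot ψ₀
  set x₀ := γ ψ₀ with hx₀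
  set F : ℝ × ℝ → ℝ := fun p => p.2 - 1 + ∑ j, v j * cinf j * (p.2 / G) ^ (v j / v₀) *
    Real.exp (-(β * z j * e * p.1)) with hFdef
  set Φ : ℝ × ℝ → ℝ × ℝ := fun p => (p.1, F p) with hΦdef
  -- smoothness of F at (ψ₀, x₀)
  have hFsm : ContDiffAt ℝ (⊤ : ℕ∞) F (ψ₀, x₀) := by
    apply ContDiffAt.add
    · exact (contDiff_snd.sub contDiff_const).contDiffAt
    · apply ContDiffAt.sum; intro j _
      have hbase : ContDiffAt ℝ (⊤ : ℕ∞) (fun p : ℝ × ℝ => p.2 / G) (ψ₀, x₀) :=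
        (contDiff_snd.div_const G).contDiffAt
      have hne : ((ψ₀, x₀).2 / G) ≠ 0 := ne_of_gt (div_pos hx₀0 hGpos)
      have h1 : ContDiffAt ℝ (⊤ : ℕ∞) (fun p : ℝ × ℝ => (p.2 / G) ^ (v j / v₀)) (ψ₀, x₀) :=
        hbase.rpow_const_of_ne hne
      have h2 : ContDiffAt ℝ (⊤ : ℕ∞) (fun p : ℝ × ℝ => Real.exp (-(β * z j * e * p.1))) (ψ₀, x₀) :=
        (Real.contDiff_exp.comp ((contDiff_const.mul contDiff_fst).neg)).contDiffAt
      exact (contDiffAt_const.mul h1).mul h2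
  -- derivative of each term
  have hterm : ∀ j : Fin M, HasFDerivAt
      (fun p : ℝ × ℝ => v j * cinf j * (p.2 / G) ^ (v j / v₀) * Real.exp (-(β * z j * e * p.1)))
      ((v j * cinf j * (x₀ / G) ^ (v j / v₀) * (Real.exp (-(β * z j * e * ψ₀)) * -(β * z j * e)))
          • ContinuousLinearMap.fst ℝ ℝ ℝ
        + (Real.exp (-(β * z j * e * ψ₀)) *
            (v j * cinf j * (v j / v₀ * (x₀ / G) ^ (v j / v₀ - 1) * G⁻¹)))
          • ContinuousLinearMap.snd ℝ ℝ ℝ)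
      (ψ₀, x₀) := by
    intro j
    have hu' : HasDerivAt (fun t : ℝ => (t / G) ^ (v j / v₀))
        (v j / v₀ * (x₀ / G) ^ (v j / v₀ - 1) * G⁻¹) x₀ := by
      have h1 : HasDerivAt (fun y : ℝ => y ^ (v j / v₀))
          (v j / v₀ * (x₀ / G) ^ (v j / v₀ - 1)) (x₀ / G) :=
        Real.hasDerivAt_rpow_const (Or.inl (ne_of_gt (div_pos hx₀0 hGpos)))
      have h2 : HasDerivAt (fun t : ℝ => t / G) G⁻¹ x₀ := by
        simpa [div_eq_mul_inv] using (hasDerivAt_id x₀).mul_const G⁻¹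
      exact h1.comp x₀ h2
    have hu : HasFDerivAt (fun p : ℝ × ℝ => (p.2 / G) ^ (v j / v₀))
        ((v j / v₀ * (x₀ / G) ^ (v j / v₀ - 1) * G⁻¹) • ContinuousLinearMap.snd ℝ ℝ ℝ)
        (ψ₀, x₀) := by
        exact hu'.comp_hasFDerivAt (f := Prod.snd) (ψ₀, x₀) hasFDerivAt_snd
    have hw' : HasDerivAt (fun t : ℝ => Real.exp (-(β * z j * e * t)))
        (Real.exp (-(β * z j * e * ψ₀)) * -(β * z j * e)) ψ₀ := by
      have h2 : HasDerivAt (fun t : ℝ => -(β * z j * e * t)) (-(β * z j * e)) ψ₀ := by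
        have := ((hasDerivAt_id ψ₀).const_mul (β * z j * e)).neg
        simp at this ⊢
        exact this
      have := (Real.hasDerivAt_exp (-(β * z j * e * ψ₀))).comp ψ₀ h2
      simp at this ⊢
      exact this
    have hw : HasFDerivAt (fun p : ℝ × ℝ => Real.exp (-(β * z j * e * p.1)))
        ((Real.exp (-(β * z j * e * ψ₀)) * -(β * z j * e)) • ContinuousLinearMap.fst ℝ ℝ ℝ)
        (ψ₀, x₀) := hw'.comp_hasFDerivAt (f := Prod.fst) (ψ₀, x₀) hasFDerivAt_fst
    have h := (hu.const_mul (v j * cinf j)).mul hw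
    refine h.congr_fderiv ?_
    rw [smul_smul, smul_smul, smul_smul]
    ring_nf
  set a : ℝ := ∑ j, (v j * cinf j * (x₀ / G) ^ (v j / v₀) *
    (Real.exp (-(β * z j * e * ψ₀)) * -(β * z j * e))) with ha
  set b : ℝ := 1 + ∑ j, (Real.exp (-(β * z j * e * ψ₀)) *
    (v j * cinf j * (v j / v₀ * (x₀ / G) ^ (v j / v₀ - 1) * G⁻¹))) with hb
  have hbpos : 0 < b := by
    have hs : 0 ≤ ∑ j, (Real.exp (-(β * z j * e * ψ₀)) *
        (v j * cinf j * (v j / v₀ * (x₀ / G) ^ (v j / v₀ - 1) * G⁻¹))) := by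
      apply Finset.sum_nonneg
      intro j _
      have h1 : (0:ℝ) ≤ v j * cinf j := (mul_pos (hv j) (hcinf j)).le
      have h2 : (0:ℝ) ≤ (x₀ / G) ^ (v j / v₀ - 1) :=
        Real.rpow_nonneg (div_nonneg hx₀0.le hGpos.le) _
      have h3 : (0:ℝ) ≤ v j / v₀ := (div_pos (hv j) hv₀).le
      exact mul_nonneg (Real.exp_pos _).le
        (mul_nonneg h1 (mul_nonneg (mul_nonneg h3 h2) (inv_nonneg.mpr hGpos.le)))
    rw [hb]; linarith
  have hFd : HasFDerivAt F
      (a • ContinuousLinearMap.fst ℝ ℝ ℝ + b • ContinuousLinearMap.snd ℝ ℝ ℝ) (ψ₀, x₀) := by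
    have h1 : HasFDerivAt (fun p : ℝ × ℝ => p.2 - 1) (ContinuousLinearMap.snd ℝ ℝ ℝ) (ψ₀, x₀) :=
      hasFDerivAt_snd.sub_const 1
    have h2 := HasFDerivAt.fun_sum (fun (j : Fin M) (_ : j ∈ Finset.univ) => hterm j)
    have h3 := h1.add h2
    refine h3.congr_fderiv ?_
    rw [ha, hb, Finset.sum_add_distrib, ← Finset.sum_smul, ← Finset.sum_smul, add_smul, one_smul]
    abel

  -- the continuous linear equivalence
  set L₁ : ℝ × ℝ →L[ℝ] ℝ × ℝ := (ContinuousLinearMap.fst ℝ ℝ ℝ).prod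
    (a • ContinuousLinearMap.fst ℝ ℝ ℝ + b • ContinuousLinearMap.snd ℝ ℝ ℝ) with hL₁
  set L₂ : ℝ × ℝ →L[ℝ] ℝ × ℝ := (ContinuousLinearMap.fst ℝ ℝ ℝ).prod
    (b⁻¹ • ContinuousLinearMap.snd ℝ ℝ ℝ - (a * b⁻¹) • ContinuousLinearMap.fst ℝ ℝ ℝ) with hL₂
  have hbne : b ≠ 0 := ne_of_gt hbpos
  have hinv1 : Function.LeftInverse L₂ L₁ := by
    intro p
    simp only [hL₁, hL₂, ContinuousLinearMap.prod_apply, ContinuousLinearMap.add_apply,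
      ContinuousLinearMap.sub_apply, ContinuousLinearMap.smul_apply,
      ContinuousLinearMap.coe_fst', ContinuousLinearMap.coe_snd', smul_eq_mul]
    ext
    · rfl
    · show b⁻¹ * (a * p.1 + b * p.2) - a * b⁻¹ * p.1 = p.2
      field_simp
      ring
  have hinv2 : Function.RightInverse L₂ L₁ := by
    intro p
    simp only [hL₁, hL₂, ContinuousLinearMap.prod_apply, ContinuousLinearMap.add_apply,
      ContinuousLinearMap.sub_apply, ContinuousLinearMap.smul_apply,
      ContinuousLinearMap.coe_fst', ContinuousLinearMap.coe_snd', smul_eq_mul]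
    ext
    · rfl
    · show a * p.1 + b * (b⁻¹ * p.2 - a * b⁻¹ * p.1) = p.2
      field_simp
      ring
  set E : (ℝ × ℝ) ≃L[ℝ] (ℝ × ℝ) := ContinuousLinearEquiv.equivOfInverse L₁ L₂ hinv1 hinv2 with hE
  have hΦd : HasFDerivAt Φ (E : ℝ × ℝ →L[ℝ] ℝ × ℝ) (ψ₀, x₀) := by
    have hcoe : (E : ℝ × ℝ →L[ℝ] ℝ × ℝ) = L₁ := rfl
    rw [hcoe, hL₁]
    exact HasFDerivAt.prodMk hasFDerivAt_fst hFd
  have hΦsm : ContDiffAt ℝ (⊤ : ℕ∞) Φ (ψ₀, x₀) := ContDiffAt.prodMk contDiffAt_fst hFsm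
  have hn : ((⊤ : ℕ∞) : WithTop ℕ∞) ≠ 0 := by simp
  have hstrict : HasStrictFDerivAt Φ (E : ℝ × ℝ →L[ℝ] ℝ × ℝ) (ψ₀, x₀) :=
    hΦsm.hasStrictFDerivAt' hΦd hn
  set ginv : ℝ × ℝ → ℝ × ℝ := hΦsm.localInverse hΦd hn with hginvdef
  have hginv_sm : ContDiffAt ℝ (⊤ : ℕ∞) ginv (Φ (ψ₀, x₀)) := hΦsm.to_localInverse hΦd hn
  have hF0 : F (ψ₀, x₀) = 0 := hx₀eq
  have hΦp : Φ (ψ₀, x₀) = (ψ₀, 0) := by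
    rw [hΦdef]; simp [hF0]
  have hRI : ∀ᶠ y in 𝓝 (Φ (ψ₀, x₀)), Φ (ginv y) = y := hstrict.eventually_right_inverse
  have hcontginv : ContinuousAt ginv (Φ (ψ₀, x₀)) := hstrict.localInverse_continuousAt
  have hginv_img : ginv (Φ (ψ₀, x₀)) = (ψ₀, x₀) := hΦsm.localInverse_apply_image hΦd hn
  -- the candidate smooth function
  set g2 : ℝ → ℝ := fun ψ => (ginv (ψ, 0)).2 with hg2
  have htend : Filter.Tendsto (fun ψ : ℝ => (ψ, (0:ℝ))) (𝓝 ψ₀) (𝓝 (Φ (ψ₀, x₀))) := by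
    rw [hΦp]
    exact (continuous_id.prodMk continuous_const).continuousAt
  have hg2cont : ContinuousAt g2 ψ₀ := by
    have hc : ContinuousAt ginv (ψ₀, (0:ℝ)) := by rw [← hΦp]; exact hcontginv
    have hc1 : ContinuousAt (fun ψ : ℝ => ginv (ψ, 0)) ψ₀ :=
      ContinuousAt.comp (f := fun ψ : ℝ => (ψ, (0:ℝ))) (x := ψ₀) hc
        ((continuous_id.prodMk continuous_const).continuousAt)
    exact continuous_snd.continuousAt.comp hc1
  have hg2x₀ : g2 ψ₀ = x₀ := by
    have : ginv (ψ₀, 0) = (ψ₀, x₀) := by rw [← hΦp]; exact hginv_img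
    simp [hg2, this]
  have hmemIoo : ∀ᶠ ψ in 𝓝 ψ₀, g2 ψ ∈ Set.Ioo (0:ℝ) 1 := by
    apply hg2cont.eventually_mem
    rw [hg2x₀]
    exact isOpen_Ioo.mem_nhds ⟨hx₀0, hx₀1⟩
  have hRI' : ∀ᶠ ψ in 𝓝 ψ₀, Φ (ginv (ψ, 0)) = (ψ, 0) := htend.eventually hRI
  have key : ∀ᶠ ψ in 𝓝 ψ₀, γ ψ = g2 ψ := by
    filter_upwards [hmemIoo, hRI'] with ψ hmem hri
    have h1 : (ginv (ψ, 0)).1 = ψ := by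
      have := congrArg Prod.fst hri
      simpa [hΦdef] using this
    have h2 : F (ginv (ψ, 0)) = 0 := by
      have := congrArg Prod.snd hri
      simpa [hΦdef] using this
    have h3 : ginv (ψ, 0) = (ψ, g2 ψ) := by
      rw [hg2]; exact Prod.ext h1 rfl
    rw [h3] at h2
    have h4 : g2 ψ - 1 + ∑ j, v j * cinf j * (g2 ψ / G) ^ (v j / v₀) *
        Real.exp (-(β * z j * e * ψ)) = 0 := h2
    exact (huniq ψ (g2 ψ) hmem h4).symm
  have hg2sm : ContDiffAt ℝ (⊤ : ℕ∞) g2 ψ₀ := by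
    have h1 : ContDiffAt ℝ (⊤ : ℕ∞) (fun ψ : ℝ => (ψ, (0:ℝ))) ψ₀ :=
      (contDiff_id.prodMk contDiff_const).contDiffAt
    have h2 : ContDiffAt ℝ (⊤ : ℕ∞) ginv (ψ₀, 0) := hΦp ▸ hginv_sm
    have h3 : ContDiffAt ℝ (⊤ : ℕ∞) (fun ψ : ℝ => ginv (ψ, 0)) ψ₀ := h2.comp ψ₀ h1
    exact contDiffAt_snd.comp ψ₀ h3
  exact hg2sm.congr_of_eventuallyEq key

/-- Theorem 3.1, smoothness of the generalized Boltzmann distributions: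
with `γ : ℝ → (0,1)` the unique-root function and
`B_i(ψ) = c_i^∞ (γ(ψ)/γ^∞)^(v i/v₀) exp(−β z_i e ψ)`, each `B_i` is `C^∞` and
`0 < B_i(ψ) < 1/v_i` for every `ψ`. -/
theorem generalized_Boltzmann_smooth_bounded
    (M : ℕ) (hM : 1 ≤ M) (v₀ : ℝ) (hv₀ : 0 < v₀)
    (v z cinf : Fin M → ℝ) (hv : ∀ i, 0 < v i)
    (β e : ℝ) (hβ : 0 < β) (he : 0 < e)
    (hcinf : ∀ i, 0 < cinf i) (hsum : ∑ j, v j * cinf j < 1)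
    (γ : ℝ → ℝ)
    (hroot : ∀ ψ : ℝ, γ ψ ∈ Set.Ioo (0 : ℝ) 1 ∧
      γ ψ - 1 + ∑ j, v j * cinf j * (γ ψ / (1 - ∑ i, v i * cinf i)) ^ (v j / v₀) *
        Real.exp (-(β * z j * e * ψ)) = 0)
    (huniq : ∀ ψ x : ℝ, x ∈ Set.Ioo (0 : ℝ) 1 →
      x - 1 + ∑ j, v j * cinf j * (x / (1 - ∑ i, v i * cinf i)) ^ (v j / v₀) *
        Real.exp (-(β * z j * e * ψ)) = 0 → x = γ ψ)
    (B : Fin M → ℝ → ℝ)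
    (hB : ∀ i ψ, B i ψ = cinf i * (γ ψ / (1 - ∑ j, v j * cinf j)) ^ (v i / v₀) *
      Real.exp (-(β * z i * e * ψ))) :
    ∀ i, ContDiff ℝ (⊤ : ℕ∞) (B i) ∧ ∀ ψ : ℝ, 0 < B i ψ ∧ B i ψ < 1 / v i := by
  intro i
  have hγsm : ContDiff ℝ (⊤ : ℕ∞) γ :=
    gamma_smooth_aux M v₀ hv₀ v z cinf hv β e hcinf hsum γ hroot huniq
  have hGpos : 0 < 1 - ∑ j, v j * cinf j := sub_pos.mpr hsum
  have hγpos : ∀ ψ, 0 < γ ψ := fun ψ => (hroot ψ).1.1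
  have hγlt : ∀ ψ, γ ψ < 1 := fun ψ => (hroot ψ).1.2
  have hBpos : ∀ j ψ, 0 < B j ψ := by
    intro j ψ
    rw [hB]
    exact mul_pos (mul_pos (hcinf j)
      (Real.rpow_pos_of_pos (div_pos (hγpos ψ) hGpos) _)) (Real.exp_pos _)
  constructor
  · have hsmooth : ContDiff ℝ (⊤ : ℕ∞) (fun ψ => cinf i * (γ ψ / (1 - ∑ j, v j * cinf j)) ^ (v i / v₀) *
        Real.exp (-(β * z i * e * ψ))) := by
      rw [contDiff_iff_contDiffAt]
      intro ψ
      have h1 : ContDiffAt ℝ (⊤ : ℕ∞) (fun ψ => γ ψ / (1 - ∑ j, v j * cinf j)) ψ :=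
        (hγsm.div_const _).contDiffAt
      have h2 : ContDiffAt ℝ (⊤ : ℕ∞)
          (fun ψ => (γ ψ / (1 - ∑ j, v j * cinf j)) ^ (v i / v₀)) ψ :=
        h1.rpow_const_of_ne (ne_of_gt (div_pos (hγpos ψ) hGpos))
      have h3 : ContDiffAt ℝ (⊤ : ℕ∞) (fun ψ : ℝ => Real.exp (-(β * z i * e * ψ))) ψ :=
        (Real.contDiff_exp.comp ((contDiff_const.mul contDiff_id).neg)).contDiffAt
      exact (contDiffAt_const.mul h2).mul h3
    have hBeq : B i = fun ψ => cinf i * (γ ψ / (1 - ∑ j, v j * cinf j)) ^ (v i / v₀) *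
        Real.exp (-(β * z i * e * ψ)) := funext (hB i)
    rw [hBeq]
    exact hsmooth
  · intro ψ
    refine ⟨hBpos i ψ, ?_⟩
    have hsumB : ∑ j, v j * B j ψ = 1 - γ ψ := by
      have h := (hroot ψ).2
      have heq : ∑ j, v j * B j ψ = ∑ j, v j * cinf j *
          (γ ψ / (1 - ∑ i, v i * cinf i)) ^ (v j / v₀) * Real.exp (-(β * z j * e * ψ)) :=
        Finset.sum_congr rfl fun j _ => by rw [hB]; ring
      rw [heq]; linarith
    have hle : v i * B i ψ ≤ ∑ j, v j * B j ψ :=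
      Finset.single_le_sum (f := fun j => v j * B j ψ)
        (fun j _ => (mul_pos (hv j) (hBpos j ψ)).le) (Finset.mem_univ i)
    have hlt : v i * B i ψ < 1 := by
      have := hγpos ψ
      linarith
    rw [lt_div_iff₀ (hv i)]
    linarith [hlt]
end

section
/- (Derivative identity for the solvent volume fraction, equation (GammaPrime).) Fix M ≥ 1, v₀ > 0, ionic volumes v_l > 0, valences z_l ∈ ℝ, β > 0, e > 0, and bulk concentrations c_l^∞ > 0 with γ^∞ := 1 − Σ_l v_l c_l^∞ ∈ (0,1). Let γ : ℝ → (0,1) be the unique-root function of γ − 1 + Σ_{j=1}^M v_j c_j^∞ (γ/γ^∞)^{v_j/v₀} exp(−β z_j e ψ) = 0 and let B_l(ψ) = c_l^∞ (γ(ψ)/γ^∞)^{v_l/v₀} exp(−β z_l e ψ). Then γ is differentiable on ℝ and for every ψ ∈ ℝ, γ′(ψ) = β v₀ e γ(ψ) (Σ_{l=1}^M z_l v_l B_l(ψ)) / (v₀ γ(ψ) + Σ_{l=1}^M v_l² B_l(ψ)). -/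
/-!
For fixed `ψ` the left-hand side `F(ψ, γ)` of the defining equation has
`∂F/∂γ = 1 + ∑ v_l² B_l / (v₀ γ) > 0` and `∂F/∂ψ = -β e ∑ z_l v_l B_l`. The implicit function
theorem gives a strictly differentiable local solution branch through `(ψ, γ(ψ))`; uniqueness of
the root in `(0, 1)` identifies it with `γ` near `ψ`, so `γ' = -(∂F/∂ψ) / (∂F/∂γ)`, which is the
claimed formula after clearing the denominator `v₀ γ`.
-/

open Filter Topology

section ImplicitFunction

variable {𝕜 : Type*} [NontriviallyNormedField 𝕜]
  {E₁ : Type*} [NormedAddCommGroup E₁] [NormedSpace 𝕜 E₁] [CompleteSpace E₁]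
  {E₂ : Type*} [NormedAddCommGroup E₂] [NormedSpace 𝕜 E₂] [CompleteSpace E₂]
  {F : Type*} [NormedAddCommGroup F] [NormedSpace 𝕜 F] [CompleteSpace F]

theorem HasStrictFDerivAt.hasStrictFDerivAt_of_unique_root {f : E₁ × E₂ → F}
    {f' : E₁ × E₂ →L[𝕜] F} {g : E₁ → E₂} {U : Set E₂} {x₀ : E₁}
    (hf : HasStrictFDerivAt f f' (x₀, g x₀)) (hf₂ : (f' ∘L .inr 𝕜 E₁ E₂).IsInvertible)
    (hU : IsOpen U) (hgx₀ : g x₀ ∈ U) (hroot : f (x₀, g x₀) = 0)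
    (huniq : ∀ x, ∀ y ∈ U, f (x, y) = 0 → y = g x) :
    HasStrictFDerivAt g (-(f' ∘L .inr 𝕜 E₁ E₂).inverse ∘L (f' ∘L .inl 𝕜 E₁ E₂)) x₀ := by
  set φ := hf.implicitFunctionOfProdDomain hf₂
  have hφ_mem : ∀ᶠ x in 𝓝 x₀, φ x ∈ U :=
    hf.tendsto_implicitFunctionOfProdDomain hf₂ (hU.mem_nhds hgx₀)
  have hφ_root : ∀ᶠ x in 𝓝 x₀, f (x, φ x) = 0 := by
    simpa [hroot] using hf.eventually_apply_implicitFunctionOfProdDomain hf₂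
  have hφg : φ =ᶠ[𝓝 x₀] g := by
    filter_upwards [hφ_mem, hφ_root] with x hxU hx using huniq x _ hxU hx
  exact (hf.hasStrictFDerivAt_implicitFunctionOfProdDomain hf₂).congr_of_eventuallyEq hφg

variable [CompleteSpace 𝕜]

theorem HasStrictFDerivAt.hasStrictDerivAt_of_unique_root {f : 𝕜 × 𝕜 → 𝕜} {a b : 𝕜}
    {g : 𝕜 → 𝕜} {U : Set 𝕜} {x₀ : 𝕜}
    (hf : HasStrictFDerivAt f
      (a • ContinuousLinearMap.fst 𝕜 𝕜 𝕜 + b • ContinuousLinearMap.snd 𝕜 𝕜 𝕜) (x₀, g x₀))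
    (hb : b ≠ 0)
    (hU : IsOpen U) (hgx₀ : g x₀ ∈ U) (hroot : f (x₀, g x₀) = 0)
    (huniq : ∀ x, ∀ y ∈ U, f (x, y) = 0 → y = g x) :
    HasStrictDerivAt g (-(a / b)) x₀ := by
  set D := a • ContinuousLinearMap.fst 𝕜 𝕜 𝕜 + b • ContinuousLinearMap.snd 𝕜 𝕜 𝕜
  set L := D ∘L ContinuousLinearMap.inr 𝕜 𝕜 𝕜
  have hL : ∀ t, L t = b * t := fun t => by simp [L, D]
  have hL_inv : L.IsInvertible :=
    ⟨ContinuousLinearEquiv.unitsEquivAut 𝕜 (Units.mk0 b hb), by ext; simp [hL]⟩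
  have hLa : L.inverse a = a / b := by
    rw [← hL_inv.inverse_apply_self (a / b), hL, mul_div_cancel₀ a hb]
  have hDa : D (ContinuousLinearMap.inl 𝕜 𝕜 𝕜 1) = a := by simp [D]
  refine (hf.hasStrictFDerivAt_of_unique_root hL_inv hU hgx₀ hroot huniq).hasStrictDerivAt
    |>.congr_deriv ?_
  change -L.inverse (D (ContinuousLinearMap.inl 𝕜 𝕜 𝕜 1)) = _
  rw [hDa, hLa]

end ImplicitFunction

theorem hasStrictFDerivAt_mul_rpow_div_mul_exp (c g p k : ℝ) {ψ x : ℝ} (hx : x ≠ 0)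
    (hg : g ≠ 0) :
    HasStrictFDerivAt (fun q : ℝ × ℝ => c * (q.2 / g) ^ p * Real.exp (-(k * q.1)))
      ((-(k * (c * (x / g) ^ p * Real.exp (-(k * ψ))))) • ContinuousLinearMap.fst ℝ ℝ ℝ +
        (p * (c * (x / g) ^ p * Real.exp (-(k * ψ))) / x) • ContinuousLinearMap.snd ℝ ℝ ℝ)
      (ψ, x) := by
  have hpow := (((hasStrictFDerivAt_snd (p := (ψ, x))).mul_const g⁻¹).rpow_const (p := p)
    (Or.inl (div_ne_zero hx hg))).const_mul c
  have hexp := ((hasStrictFDerivAt_fst (p := (ψ, x))).const_mul k).fun_neg.exp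
  have hfun : (fun q : ℝ × ℝ => c * (q.2 / g) ^ p * Real.exp (-(k * q.1))) =
      fun q => c * (q.2 * g⁻¹) ^ p * Real.exp (-(k * q.1)) := by simp only [div_eq_mul_inv]
  rw [hfun]
  refine (hpow.fun_mul hexp).congr_fderiv ?_
  ext <;> simp [Real.rpow_sub_one (mul_ne_zero hx (inv_ne_zero hg))] <;> field_simp

noncomputable section

namespace SolventFraction

variable {M : ℕ} (v₀ β e : ℝ) (v z cinf : Fin M → ℝ)

def bulkSolventFraction : ℝ := 1 - ∑ i, v i * cinf i

def residual (q : ℝ × ℝ) : ℝ :=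
  q.2 - 1 + ∑ j, v j * cinf j * (q.2 / bulkSolventFraction v cinf) ^ (v j / v₀) *
    Real.exp (-(β * z j * e * q.1))

def boltzmann (l : Fin M) (ψ x : ℝ) : ℝ :=
  cinf l * (x / bulkSolventFraction v cinf) ^ (v l / v₀) * Real.exp (-(β * z l * e * ψ))

variable {v₀ β e v z cinf}

theorem boltzmann_pos (hcinf : ∀ l, 0 < cinf l) (hbulk : 0 < bulkSolventFraction v cinf)
    (l : Fin M) (ψ : ℝ) {x : ℝ} (hx : 0 < x) : 0 < boltzmann v₀ β e v z cinf l ψ x := by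
  unfold boltzmann
  have := hcinf l
  positivity

theorem hasStrictFDerivAt_residual (hbulk : bulkSolventFraction v cinf ≠ 0) {ψ x : ℝ}
    (hx : x ≠ 0) :
    HasStrictFDerivAt (residual v₀ β e v z cinf)
      ((-(β * e * ∑ l, z l * v l * boltzmann v₀ β e v z cinf l ψ x)) •
          ContinuousLinearMap.fst ℝ ℝ ℝ +
        (1 + (∑ l, v l ^ 2 * boltzmann v₀ β e v z cinf l ψ x) / (v₀ * x)) •
          ContinuousLinearMap.snd ℝ ℝ ℝ) (ψ, x) := by
  have hsum := HasStrictFDerivAt.fun_sum (u := Finset.univ) fun j _ =>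
    hasStrictFDerivAt_mul_rpow_div_mul_exp (v j * cinf j) (bulkSolventFraction v cinf)
      (v j / v₀) (β * z j * e) (ψ := ψ) hx hbulk
  refine (((hasStrictFDerivAt_snd (p := (ψ, x))).sub_const 1).add hsum).congr_fderiv ?_
  ext <;> simp [boltzmann, Finset.mul_sum, Finset.sum_div] <;>
    exact Finset.sum_congr rfl fun _ _ => by ring

end SolventFraction

end

open SolventFraction

theorem solvent_fraction_deriv_general
    (M : ℕ) (v₀ : ℝ) (hv₀ : 0 < v₀)
    (v z cinf : Fin M → ℝ)
    (β e : ℝ)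
    (hcinf : ∀ l, 0 < cinf l) (hsum : ∑ l, v l * cinf l < 1)
    (γ : ℝ → ℝ)
    (hroot : ∀ ψ : ℝ, γ ψ ∈ Set.Ioo (0 : ℝ) 1 ∧
      γ ψ - 1 + ∑ j, v j * cinf j * (γ ψ / (1 - ∑ i, v i * cinf i)) ^ (v j / v₀) *
        Real.exp (-(β * z j * e * ψ)) = 0)
    (huniq : ∀ ψ x : ℝ, x ∈ Set.Ioo (0 : ℝ) 1 →
      x - 1 + ∑ j, v j * cinf j * (x / (1 - ∑ i, v i * cinf i)) ^ (v j / v₀) *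
        Real.exp (-(β * z j * e * ψ)) = 0 → x = γ ψ)
    (B : Fin M → ℝ → ℝ)
    (hB : ∀ l ψ, B l ψ = cinf l * (γ ψ / (1 - ∑ j, v j * cinf j)) ^ (v l / v₀) *
      Real.exp (-(β * z l * e * ψ))) :
    Differentiable ℝ γ ∧
    ∀ ψ : ℝ, deriv γ ψ =
      β * v₀ * e * γ ψ * (∑ l, z l * v l * B l ψ) /
        (v₀ * γ ψ + ∑ l, (v l) ^ 2 * B l ψ) := by
  have hbulk : 0 < bulkSolventFraction v cinf := sub_pos.mpr hsum
  have hderiv : ∀ ψ, HasDerivAt γ (β * v₀ * e * γ ψ * (∑ l, z l * v l * B l ψ) /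
      (v₀ * γ ψ + ∑ l, (v l) ^ 2 * B l ψ)) ψ := by
    intro ψ
    obtain ⟨hγψ, hres⟩ := hroot ψ
    have hB_eq : ∀ l, B l ψ = boltzmann v₀ β e v z cinf l ψ (γ ψ) := fun l => hB l ψ
    have hQ : 0 ≤ ∑ l, v l ^ 2 * boltzmann v₀ β e v z cinf l ψ (γ ψ) :=
      Finset.sum_nonneg fun l _ => mul_nonneg (sq_nonneg _)
        (boltzmann_pos hcinf hbulk l ψ hγψ.1).le
    have hv₀γ : 0 < v₀ * γ ψ := mul_pos hv₀ hγψ.1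
    have hb : 1 + (∑ l, v l ^ 2 * boltzmann v₀ β e v z cinf l ψ (γ ψ)) / (v₀ * γ ψ) ≠ 0 := by
      positivity
    have hIFT := ((hasStrictFDerivAt_residual hbulk.ne' hγψ.1.ne').hasStrictDerivAt_of_unique_root
      hb isOpen_Ioo hγψ hres huniq).hasDerivAt
    simp only [hB_eq]
    refine hIFT.congr_deriv ?_
    rw [one_add_div hv₀γ.ne', neg_div, neg_neg, div_div_eq_mul_div]
    ring
  exact ⟨fun ψ => (hderiv ψ).differentiableAt, fun ψ => (hderiv ψ).deriv⟩

/-- derivative identity for the solvent volume fraction, eq. (GammaPrime):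
`γ` is differentiable on `ℝ` and
`γ′(ψ) = β v₀ e γ(ψ) (∑ l, z_l v_l B_l(ψ)) / (v₀ γ(ψ) + ∑ l, v_l² B_l(ψ))`. -/
theorem solvent_fraction_deriv
    (M : ℕ) (hM : 1 ≤ M) (v₀ : ℝ) (hv₀ : 0 < v₀)
    (v z cinf : Fin M → ℝ) (hv : ∀ l, 0 < v l)
    (β e : ℝ) (hβ : 0 < β) (he : 0 < e)
    (hcinf : ∀ l, 0 < cinf l) (hsum : ∑ l, v l * cinf l < 1)
    (γ : ℝ → ℝ)
    (hroot : ∀ ψ : ℝ, γ ψ ∈ Set.Ioo (0 : ℝ) 1 ∧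
      γ ψ - 1 + ∑ j, v j * cinf j * (γ ψ / (1 - ∑ i, v i * cinf i)) ^ (v j / v₀) *
        Real.exp (-(β * z j * e * ψ)) = 0)
    (huniq : ∀ ψ x : ℝ, x ∈ Set.Ioo (0 : ℝ) 1 →
      x - 1 + ∑ j, v j * cinf j * (x / (1 - ∑ i, v i * cinf i)) ^ (v j / v₀) *
        Real.exp (-(β * z j * e * ψ)) = 0 → x = γ ψ)
    (B : Fin M → ℝ → ℝ)
    (hB : ∀ l ψ, B l ψ = cinf l * (γ ψ / (1 - ∑ j, v j * cinf j)) ^ (v l / v₀) *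
      Real.exp (-(β * z l * e * ψ))) :
    Differentiable ℝ γ ∧
    ∀ ψ : ℝ, deriv γ ψ =
      β * v₀ * e * γ ψ * (∑ l, z l * v l * B l ψ) /
        (v₀ * γ ψ + ∑ l, (v l) ^ 2 * B l ψ) :=
  solvent_fraction_deriv_general M v₀ hv₀ v z cinf β e hcinf hsum γ hroot huniq B hB
end

section
/- (Key monotonicity inequality, equation (csum≥0).) Fix M ≥ 1, v₀ > 0, ionic volumes v_l > 0, valences z_l ∈ ℝ, β > 0, e > 0. Let γ : ℝ → ℝ and B_l : ℝ → ℝ (l = 1,…,M) be differentiable functions such that for all ψ ∈ ℝ: B_l(ψ) > 0, γ(ψ) = 1 − Σ_{l=1}^M v_l B_l(ψ) > 0, γ′(ψ) = β v₀ e γ(ψ) (Σ_l z_l v_l B_l(ψ)) / (v₀ γ(ψ) + Σ_l v_l² B_l(ψ)), and B_l′(ψ) = ( (v_l γ′(ψ))/(v₀ γ(ψ)) − β z_l e ) B_l(ψ). Then for every ψ ∈ ℝ, Σ_{l=1}^M z_l B_l′(ψ) ≤ −(β e v₀ γ(ψ) / (v₀ γ(ψ) + Σ_{j=1}^M v_j²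 B_j(ψ))) · Σ_{j=1}^M z_j² B_j(ψ) ≤ 0. -/
/-! With `κ = β e`, `a = v₀ γ(ψ)`, `S₁ = ∑ z_l v_l B_l`, `S₂ = ∑ v_l² B_l` and `Q = ∑ z_l² B_l`,
the two derivative identities give `∑ z_l B_l′ = κ S₁² / (a + S₂) - κ Q`, which differs from
`-κ a Q / (a + S₂)` by `κ (S₁² - Q S₂) / (a + S₂)`. This is nonpositive by the Cauchy–Schwarz
inequality for the weights `B_l`. -/

theorem Finset.weighted_sum_mul_sq_le_sq_mul_sq {ι R : Type*} [CommSemiring R] [LinearOrder R]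
    [IsStrictOrderedRing R] [ExistsAddOfLE R] (s : Finset ι) (f g : ι → R) {w : ι → R}
    (hw : ∀ i ∈ s, 0 ≤ w i) :
    (∑ i ∈ s, f i * g i * w i) ^ 2 ≤ (∑ i ∈ s, f i ^ 2 * w i) * ∑ i ∈ s, g i ^ 2 * w i :=
  Finset.sum_sq_le_sum_mul_sum_of_sq_le_mul s
    (fun i hi ↦ mul_nonneg (sq_nonneg _) (hw i hi)) (fun i hi ↦ mul_nonneg (sq_nonneg _) (hw i hi))
    (fun _ _ ↦ le_of_eq (by ring))

theorem mul_div_mul_sub_le_neg_mul_div_mul {κ a S₁ S₂ Q : ℝ} (hκ : 0 ≤ κ) (hD : 0 < a + S₂)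
    (hCS : S₁ ^ 2 ≤ Q * S₂) :
    κ * S₁ / (a + S₂) * S₁ - κ * Q ≤ -(κ * a / (a + S₂)) * Q := by
  have key : κ * S₁ / (a + S₂) * S₁ - κ * Q - -(κ * a / (a + S₂)) * Q
      = κ * (S₁ ^ 2 - Q * S₂) / (a + S₂) := by
    field_simp
    ring
  rw [← sub_nonpos, key]
  exact div_nonpos_of_nonpos_of_nonneg (mul_nonpos_of_nonneg_of_nonpos hκ (sub_nonpos.2 hCS)) hD.le

theorem sum_z_deriv_nonpos_general
    (M : ℕ) (v₀ : ℝ) (hv₀ : 0 < v₀)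
    (v z : Fin M → ℝ)
    (β e : ℝ) (hβ : 0 < β) (he : 0 < e)
    (γ : ℝ → ℝ) (B : Fin M → ℝ → ℝ)
    (hBpos : ∀ l (ψ : ℝ), 0 < B l ψ)
    (hγpos : ∀ ψ : ℝ, 0 < γ ψ)
    (hγ' : ∀ ψ : ℝ, deriv γ ψ =
      β * v₀ * e * γ ψ * (∑ l, z l * v l * B l ψ) /
        (v₀ * γ ψ + ∑ l, (v l) ^ 2 * B l ψ))
    (hB' : ∀ l (ψ : ℝ), deriv (B l) ψ =
      (v l * deriv γ ψ / (v₀ * γ ψ) - β * z l * e) * B l ψ) :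
    ∀ ψ : ℝ,
      (∑ l, z l * deriv (B l) ψ ≤
        -(β * e * v₀ * γ ψ / (v₀ * γ ψ + ∑ j, (v j) ^ 2 * B j ψ)) *
          ∑ j, (z j) ^ 2 * B j ψ) ∧
      -(β * e * v₀ * γ ψ / (v₀ * γ ψ + ∑ j, (v j) ^ 2 * B j ψ)) *
          ∑ j, (z j) ^ 2 * B j ψ ≤ 0 := by
  intro ψ
  have hγ'ψ := hγ' ψ
  set S₁ := ∑ l, z l * v l * B l ψ
  set S₂ := ∑ j, v j ^ 2 * B j ψ
  set Q := ∑ j, z j ^ 2 * B j ψ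
  have hB : ∀ l ∈ Finset.univ, 0 ≤ B l ψ := fun l _ ↦ (hBpos l ψ).le
  have ha : 0 < v₀ * γ ψ := mul_pos hv₀ (hγpos ψ)
  have hκ : 0 < β * e := mul_pos hβ he
  have hQ : 0 ≤ Q := Finset.sum_nonneg fun j hj ↦ mul_nonneg (sq_nonneg _) (hB j hj)
  have hD : 0 < v₀ * γ ψ + S₂ :=
    add_pos_of_pos_of_nonneg ha <| Finset.sum_nonneg fun j hj ↦ mul_nonneg (sq_nonneg _) (hB j hj)
  have hγ'_div : deriv γ ψ / (v₀ * γ ψ) = β * e * S₁ / (v₀ * γ ψ + S₂) := by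
    rw [hγ'ψ]
    field_simp [(hγpos ψ).ne']
  have hsum : ∑ l, z l * deriv (B l) ψ = β * e * S₁ / (v₀ * γ ψ + S₂) * S₁ - β * e * Q := by
    rw [← hγ'_div, Finset.mul_sum, Finset.mul_sum, ← Finset.sum_sub_distrib]
    exact Finset.sum_congr rfl fun l _ ↦ by rw [hB']; ring
  rw [show β * e * v₀ * γ ψ = β * e * (v₀ * γ ψ) by ring]
  refine ⟨?_, mul_nonpos_of_nonpos_of_nonneg (neg_nonpos.2 (by positivity)) hQ⟩
  rw [hsum]
  exact mul_div_mul_sub_le_neg_mul_div_mul hκ.le hD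
    (Finset.weighted_sum_mul_sq_le_sq_mul_sq _ z v hB)

/-- key monotonicity inequality, eq. (csum≥0): under the derivative
identities (GammaPrime) and (CPrime), for every `ψ`,
`∑ l, z_l B_l′(ψ) ≤ −(β e v₀ γ(ψ)/(v₀ γ(ψ) + ∑ j, v_j² B_j(ψ))) ∑ j, z_j² B_j(ψ) ≤ 0`. -/
theorem sum_z_deriv_nonpos
    (M : ℕ) (hM : 1 ≤ M) (v₀ : ℝ) (hv₀ : 0 < v₀)
    (v z : Fin M → ℝ) (hv : ∀ l, 0 < v l)
    (β e : ℝ) (hβ : 0 < β) (he : 0 < e)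
    (γ : ℝ → ℝ) (B : Fin M → ℝ → ℝ)
    (hγdiff : Differentiable ℝ γ) (hBdiff : ∀ l, Differentiable ℝ (B l))
    (hBpos : ∀ l (ψ : ℝ), 0 < B l ψ)
    (hγeq : ∀ ψ : ℝ, γ ψ = 1 - ∑ l, v l * B l ψ)
    (hγpos : ∀ ψ : ℝ, 0 < γ ψ)
    (hγ' : ∀ ψ : ℝ, deriv γ ψ =
      β * v₀ * e * γ ψ * (∑ l, z l * v l * B l ψ) /
        (v₀ * γ ψ + ∑ l, (v l) ^ 2 * B l ψ))
    (hB' : ∀ l (ψ : ℝ), deriv (B l) ψ =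
      (v l * deriv γ ψ / (v₀ * γ ψ) - β * z l * e) * B l ψ) :
    ∀ ψ : ℝ,
      (∑ l, z l * deriv (B l) ψ ≤
        -(β * e * v₀ * γ ψ / (v₀ * γ ψ + ∑ j, (v j) ^ 2 * B j ψ)) *
          ∑ j, (z j) ^ 2 * B j ψ) ∧
      -(β * e * v₀ * γ ψ / (v₀ * γ ψ + ∑ j, (v j) ^ 2 * B j ψ)) *
          ∑ j, (z j) ^ 2 * B j ψ ≤ 0 :=
  sum_z_deriv_nonpos_general M v₀ hv₀ v z β e hβ he γ B hBpos hγpos hγ' hB'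
end

section
/- (Theorem 3.2, existence and uniqueness for the discretized generalized PB system.) Let n ≥ 1, let A be a symmetric positive definite real n × n matrix, let b ∈ ℝⁿ, and for each index m let g_m : ℝ → ℝ be a continuous, monotone nonincreasing (antitone) function that is bounded (there exists C with |g_m(s)| ≤ C for all s ∈ ℝ). Then there exists a unique ψ ∈ ℝⁿ such that (Aψ)_m = g_m(ψ_m) + b_m for every m = 1,…,n. -/
/-!
Solutions are the critical points of the energy
`E ψ = ½ ψ ⬝ A ψ - ∑ₘ Gₘ (ψₘ) - b ⬝ ψ`, where `Gₘ` is the primitive of `gₘ` vanishing at `0`.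
Since `gₘ` is bounded, `Gₘ` grows at most linearly, while positive definiteness makes the
quadratic part grow like `‖ψ‖²`; so `E` is coercive and attains a global minimum, at which every
directional derivative `d ⬝ (A ψ - g(ψ) - b)` vanishes. For uniqueness, the difference `d` of two
solutions satisfies `d ⬝ A d = ∑ₘ dₘ (gₘ(ψ₁ₘ) - gₘ(ψ₂ₘ)) ≤ 0` because each `gₘ` is antitone.
-/

open Matrix Filter Topology

lemma exists_pos_mul_sq_norm_le {E : Type*} [NormedAddCommGroup E] [NormedSpace ℝ E]
    [ProperSpace E] {q : E → ℝ} (hq : Continuous q) (hsmul : ∀ (c : ℝ) x, q (c • x) = c ^ 2 * q x)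
    (hpos : ∀ x ≠ 0, 0 < q x) : ∃ c > 0, ∀ x, c * ‖x‖ ^ 2 ≤ q x := by
  have hq0 : q 0 = 0 := by simpa using hsmul 0 0
  rcases subsingleton_or_nontrivial E with _ | _
  · exact ⟨1, one_pos, fun x => by simp [Subsingleton.elim x 0, hq0]⟩
  obtain ⟨u, hu, hmin⟩ := (isCompact_sphere (0 : E) 1).exists_isMinOn
    (NormedSpace.sphere_nonempty.2 zero_le_one) hq.continuousOn
  have hu1 : ‖u‖ = 1 := by simpa using hu
  refine ⟨q u, hpos u (norm_ne_zero_iff.1 (by simp [hu1])), fun x => ?_⟩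
  rcases eq_or_ne x 0 with rfl | hx
  · simp [hq0]
  have hx' : ‖x‖ ≠ 0 := norm_ne_zero_iff.2 hx
  have hxu : ‖x‖⁻¹ • x ∈ Metric.sphere (0 : E) 1 := by
    simp [norm_smul, inv_mul_cancel₀ hx']
  calc q u * ‖x‖ ^ 2 ≤ q (‖x‖⁻¹ • x) * ‖x‖ ^ 2 := by gcongr; exact hmin hxu
    _ = (‖x‖ * ‖x‖⁻¹) ^ 2 * q x := by rw [hsmul]; ring
    _ = q x := by rw [mul_inv_cancel₀ hx', one_pow, one_mul]

variable {ι : Type*} [Fintype ι]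

lemma Matrix.PosDef.exists_pos_mul_sq_norm_le {A : Matrix ι ι ℝ} (hA : A.PosDef) :
    ∃ c > 0, ∀ x : ι → ℝ, c * ‖x‖ ^ 2 ≤ x ⬝ᵥ A *ᵥ x :=
  _root_.exists_pos_mul_sq_norm_le (by fun_prop)
    (fun c x => by simp only [mulVec_smul, smul_dotProduct, dotProduct_smul, smul_eq_mul]; ring)
    (fun x hx => by simpa using hA.dotProduct_mulVec_pos hx)

lemma Matrix.IsSymm.dotProduct_mulVec_add_smul {R : Type*} [CommRing R] {A : Matrix ι ι R}
    (hA : A.IsSymm) (x d : ι → R) (t : R) :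
    (x + t • d) ⬝ᵥ A *ᵥ (x + t • d) =
      x ⬝ᵥ A *ᵥ x + 2 * t * (d ⬝ᵥ A *ᵥ x) + t ^ 2 * (d ⬝ᵥ A *ᵥ d) := by
  have hsymm : x ⬝ᵥ A *ᵥ d = d ⬝ᵥ A *ᵥ x := by
    rw [dotProduct_mulVec, ← vecMul_transpose, hA.eq, dotProduct_comm]
  simp only [mulVec_add, mulVec_smul, dotProduct_add, add_dotProduct, dotProduct_smul,
    smul_dotProduct, smul_eq_mul, hsymm]
  ring

lemma exists_hasDerivAt_abs_le_mul_abs {g : ℝ → ℝ} (hg : Continuous g) {C : ℝ}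
    (hC : ∀ s, |g s| ≤ C) : ∃ G : ℝ → ℝ, (∀ x, HasDerivAt G (g x) x) ∧ ∀ x, |G x| ≤ C * |x| :=
  ⟨fun x => ∫ s in (0 : ℝ)..x, g s, fun x => hg.integral_hasStrictDerivAt 0 x |>.hasDerivAt,
    fun x => by
      simpa using intervalIntegral.norm_integral_le_of_norm_le_const (a := 0) (b := x)
        (f := g) fun s _ => hC s⟩

lemma abs_sum_le_sum_mul_norm {h : ι → ℝ → ℝ} {K : ι → ℝ} (hK : ∀ m x, |h m x| ≤ K m * |x|)
    (x : ι → ℝ) : |∑ m, h m (x m)| ≤ (∑ m, K m) * ‖x‖ := by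
  rw [Finset.sum_mul]
  refine (Finset.abs_sum_le_sum_abs _ _).trans (Finset.sum_le_sum fun m _ => ?_)
  have hK0 : 0 ≤ K m := by simpa using (abs_nonneg _).trans (hK m 1)
  exact (hK m (x m)).trans (mul_le_mul_of_nonneg_left (norm_le_pi_norm x m) hK0)

noncomputable def pbEnergy (A : Matrix ι ι ℝ) (b : ι → ℝ) (G : ι → ℝ → ℝ) (ψ : ι → ℝ) : ℝ :=
  (ψ ⬝ᵥ A *ᵥ ψ) / 2 - ∑ m, G m (ψ m) - b ⬝ᵥ ψ

section Energy

variable {A : Matrix ι ι ℝ} {b : ι → ℝ} {g G : ι → ℝ → ℝ}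

lemma continuous_pbEnergy (hG : ∀ m, Continuous (G m)) : Continuous (pbEnergy A b G) := by
  unfold pbEnergy
  fun_prop

lemma hasDerivAt_pbEnergy_add_smul (hA : A.IsSymm) (hG : ∀ m x, HasDerivAt (G m) (g m x) x)
    (ψ d : ι → ℝ) :
    HasDerivAt (fun t : ℝ => pbEnergy A b G (ψ + t • d))
      (d ⬝ᵥ (A *ᵥ ψ - (fun m => g m (ψ m)) - b)) 0 := by
  have hquad : HasDerivAt (fun t : ℝ => (ψ + t • d) ⬝ᵥ A *ᵥ (ψ + t • d))
      (2 * (d ⬝ᵥ A *ᵥ ψ)) 0 := by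
    simp only [hA.dotProduct_mulVec_add_smul]
    exact ((((hasDerivAt_id' (0 : ℝ)).const_mul 2).mul_const _).const_add _).add
      ((hasDerivAt_pow 2 (0 : ℝ)).mul_const _) |>.congr_deriv (by simp)
  have hprim : HasDerivAt (fun t : ℝ => ∑ m, G m ((ψ + t • d) m))
      (∑ m, g m (ψ m) * d m) 0 := by
    refine HasDerivAt.fun_sum fun m _ => ?_
    have hline : HasDerivAt (fun t : ℝ => ψ m + t * d m) (d m) 0 := by
      simpa using ((hasDerivAt_id (0 : ℝ)).mul_const (d m)).const_add (ψ m)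
    exact (hG m (ψ m)).comp_of_eq 0 hline (by simp)
  have hlin : HasDerivAt (fun t : ℝ => b ⬝ᵥ (ψ + t • d)) (b ⬝ᵥ d) 0 := by
    simp only [dotProduct_add, dotProduct_smul, smul_eq_mul]
    simpa using ((hasDerivAt_id (0 : ℝ)).mul_const (b ⬝ᵥ d)).const_add (b ⬝ᵥ ψ)
  refine ((hquad.div_const 2).sub hprim).sub hlin |>.congr_deriv ?_
  have hg : d ⬝ᵥ (fun m => g m (ψ m)) = ∑ m, g m (ψ m) * d m := by simp [dotProduct, mul_comm]
  rw [dotProduct_sub, dotProduct_sub, hg, dotProduct_comm d b]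
  ring

lemma mulVec_apply_eq_of_isLocalMin_pbEnergy (hA : A.IsSymm)
    (hG : ∀ m x, HasDerivAt (G m) (g m x) x) {ψ : ι → ℝ} (hψ : IsLocalMin (pbEnergy A b G) ψ)
    (m : ι) : (A *ᵥ ψ) m = g m (ψ m) + b m := by
  classical
  have hline : IsLocalMin (fun t : ℝ => pbEnergy A b G (ψ + t • Pi.single m 1)) 0 :=
    IsLocalMin.comp_continuous (f := pbEnergy A b G) (g := fun t : ℝ => ψ + t • Pi.single m 1)
      (b := 0) (by simpa using hψ) (by fun_prop)
  have h := hline.hasDerivAt_eq_zero (hasDerivAt_pbEnergy_add_smul hA hG ψ (Pi.single m 1))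
  simp only [single_dotProduct, one_mul, Pi.sub_apply] at h
  linarith

lemma tendsto_pbEnergy_cocompact (hA : A.PosDef) {C : ι → ℝ} (hG : ∀ m x, |G m x| ≤ C m * |x|) :
    Tendsto (pbEnergy A b G) (cocompact (ι → ℝ)) atTop := by
  obtain ⟨c, hc, hcA⟩ := hA.exists_pos_mul_sq_norm_le
  set M := ∑ m, C m + ∑ m, |b m|
  have hlower : ∀ ψ, c / 2 * ‖ψ‖ ^ 2 - M * ‖ψ‖ ≤ pbEnergy A b G ψ := by
    intro ψ
    have hsum := abs_le.1 (abs_sum_le_sum_mul_norm hG ψ)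
    have hdot := abs_le.1 (abs_sum_le_sum_mul_norm (h := fun m x => b m * x)
      (fun m x => (abs_mul _ _).le) ψ)
    have hb : b ⬝ᵥ ψ = ∑ m, b m * ψ m := rfl
    simp only [pbEnergy, hb]
    linarith [hsum.1, hdot.1, hcA ψ]
  have hpoly : Tendsto (fun r : ℝ => c / 2 * r ^ 2 - M * r) atTop atTop := by
    have : Tendsto (fun r : ℝ => r * (c / 2 * r - M)) atTop atTop :=
      tendsto_id.atTop_mul_atTop₀ (tendsto_atTop_add_const_right _ _
        (tendsto_id.const_mul_atTop (by positivity)))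
    exact this.congr fun r => by ring
  exact tendsto_atTop_mono hlower (hpoly.comp tendsto_norm_cocompact_atTop)

end Energy

lemma Matrix.PosDef.eq_of_mulVec_eq_antitone_add {A : Matrix ι ι ℝ} (hA : A.PosDef)
    {b : ι → ℝ} {g : ι → ℝ → ℝ} (hg : ∀ m, Antitone (g m)) {ψ₁ ψ₂ : ι → ℝ}
    (h₁ : ∀ m, (A *ᵥ ψ₁) m = g m (ψ₁ m) + b m) (h₂ : ∀ m, (A *ᵥ ψ₂) m = g m (ψ₂ m) + b m) :
    ψ₁ = ψ₂ := by
  by_contra hne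
  have hpos := hA.dotProduct_mulVec_pos (sub_ne_zero.2 hne)
  rw [star_trivial] at hpos
  have hnonpos : (ψ₁ - ψ₂) ⬝ᵥ A *ᵥ (ψ₁ - ψ₂) ≤ 0 := by
    refine Finset.sum_nonpos fun m _ => ?_
    rw [mulVec_sub, Pi.sub_apply, Pi.sub_apply, h₁, h₂, add_sub_add_right_eq_sub, mul_comm]
    exact (antivary_id_iff.2 (hg m)).sub_mul_sub_nonpos (ψ₂ m) (ψ₁ m)
  exact hnonpos.not_gt hpos

theorem discrete_PB_exists_unique_general
    (n : ℕ) (A : Matrix (Fin n) (Fin n) ℝ) (hA : A.PosDef)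
    (b : Fin n → ℝ) (g : Fin n → ℝ → ℝ)
    (hcont : ∀ m, Continuous (g m))
    (hanti : ∀ m, Antitone (g m))
    (hbdd : ∀ m, ∃ C : ℝ, ∀ s : ℝ, |g m s| ≤ C) :
    ∃! ψ : Fin n → ℝ, ∀ m, A.mulVec ψ m = g m (ψ m) + b m := by
  choose C hC using hbdd
  choose G hG hGC using fun m => exists_hasDerivAt_abs_le_mul_abs (hcont m) (hC m)
  have hGcont : ∀ m, Continuous (G m) := fun m =>
    (show Differentiable ℝ (G m) from fun x => (hG m x).differentiableAt).continuous
  obtain ⟨ψ, hψ⟩ := (continuous_pbEnergy hGcont).exists_forall_le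
    (tendsto_pbEnergy_cocompact (b := b) hA hGC)
  have hsol : ∀ m, (A *ᵥ ψ) m = g m (ψ m) + b m :=
    mulVec_apply_eq_of_isLocalMin_pbEnergy (isHermitian_iff_isSymm.1 hA.isHermitian) hG
      (Eventually.of_forall hψ)
  exact ⟨ψ, hsol, fun φ hφ => hA.eq_of_mulVec_eq_antitone_add hanti hφ hsol⟩

/-- Theorem 3.2: if `A` is symmetric positive definite and each
`g_m : ℝ → ℝ` is continuous, nonincreasing and bounded, then there exists a unique
`ψ ∈ ℝⁿ` with `(Aψ)_m = g_m(ψ_m) + b_m` for every `m`. -/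
theorem discrete_PB_exists_unique
    (n : ℕ) (hn : 1 ≤ n) (A : Matrix (Fin n) (Fin n) ℝ) (hA : A.PosDef)
    (b : Fin n → ℝ) (g : Fin n → ℝ → ℝ)
    (hcont : ∀ m, Continuous (g m))
    (hanti : ∀ m, Antitone (g m))
    (hbdd : ∀ m, ∃ C : ℝ, ∀ s : ℝ, |g m s| ≤ C) :
    ∃! ψ : Fin n → ℝ, ∀ m, A.mulVec ψ m = g m (ψ m) + b m :=
  discrete_PB_exists_unique_general n A hA b g hcont hanti hbdd
end

section
/- (Convexity of the discrete energy.) Let n ≥ 1, let A be a symmetric positive definite real n × n matrix, b ∈ ℝⁿ, and for each m let g_m : ℝ → ℝ be continuous and monotone nonincreasing (antitone). Define E : ℝⁿ → ℝ by E(η) = ½ ηᵀAη − Σ_{m=1}^n ∫₀^{η_m} g_m(s) ds − bᵀη. Then E is strictly convex on ℝⁿ. -/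
/-
The energy is ½ ηᵀAη, minus a sum of primitives of nonincreasing functions, each concave along its
coordinate, minus a linear term. The quadratic part is strictly convex because its convexity gap
`a f(x) + b f(y) - f(a x + b y)` equals `a b (x - y)ᵀ A (x - y)`, which is positive for `x ≠ y`.
-/

open scoped BigOperators
open Matrix Set

theorem StrictConvexOn.const_mul {E : Type*} [AddCommMonoid E] [Module ℝ E] {s : Set E}
    {f : E → ℝ} {c : ℝ} (hc : 0 < c) (hf : StrictConvexOn ℝ s f) :
    StrictConvexOn ℝ s fun x => c * f x := by
  refine ⟨hf.1, fun x hx y hy hxy a b ha hb hab => ?_⟩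
  have h := mul_lt_mul_of_pos_left (hf.2 hx hy hxy ha hb hab) hc
  simp only [smul_eq_mul] at h ⊢
  linear_combination h

theorem ConcaveOn.sum {𝕜 E β ι : Type*} [Semiring 𝕜] [PartialOrder 𝕜] [AddCommMonoid E]
    [AddCommMonoid β] [PartialOrder β] [IsOrderedAddMonoid β] [SMul 𝕜 E] [Module 𝕜 β]
    {s : Set E} {t : Finset ι} {f : ι → E → β} (hs : Convex 𝕜 s)
    (h : ∀ i ∈ t, ConcaveOn 𝕜 s (f i)) : ConcaveOn 𝕜 s fun x => ∑ i ∈ t, f i x := by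
  induction t using Finset.cons_induction with
  | empty => simpa using concaveOn_const (0 : β) hs
  | cons i t _ ih =>
    simp only [Finset.sum_cons]
    exact (h i (Finset.mem_cons_self i t)).add
      (ih fun j hj => h j (Finset.mem_cons_of_mem hj))

theorem Matrix.PosDef.strictConvexOn_dotProduct_mulVec {ι : Type*} [Fintype ι]
    {A : Matrix ι ι ℝ} (hA : A.PosDef) :
    StrictConvexOn ℝ univ fun x : ι → ℝ => x ⬝ᵥ A *ᵥ x := by
  refine ⟨convex_univ, fun x _ y _ hxy a b ha hb hab => ?_⟩
  have hpos : 0 < (x - y) ⬝ᵥ A *ᵥ (x - y) := by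
    simpa using hA.dotProduct_mulVec_pos (sub_ne_zero.mpr hxy)
  have gap : a * (x ⬝ᵥ A *ᵥ x) + b * (y ⬝ᵥ A *ᵥ y) - (a • x + b • y) ⬝ᵥ A *ᵥ (a • x + b • y)
      = a * b * ((x - y) ⬝ᵥ A *ᵥ (x - y)) := by
    simp only [mulVec_add, mulVec_sub, mulVec_smul, dotProduct_add, add_dotProduct,
      dotProduct_sub, sub_dotProduct, dotProduct_smul, smul_dotProduct, smul_eq_mul]
    linear_combination -(a * (x ⬝ᵥ A *ᵥ x) + b * (y ⬝ᵥ A *ᵥ y)) * hab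
  simp only [smul_eq_mul]
  linarith [mul_pos (mul_pos ha hb) hpos]

theorem Antitone.concaveOn_intervalIntegral {g : ℝ → ℝ} (hcont : Continuous g)
    (hanti : Antitone g) (a : ℝ) : ConcaveOn ℝ univ fun x => ∫ s in a..x, g s :=
  Antitone.concaveOn_univ_of_deriv
    (fun x => (hcont.integral_hasStrictDerivAt a x).hasDerivAt.differentiableAt)
    (by rwa [funext (hcont.deriv_integral g a)])

theorem discrete_energy_strictConvex_general
    (n : ℕ) (A : Matrix (Fin n) (Fin n) ℝ) (hA : A.PosDef)
    (b : Fin n → ℝ) (g : Fin n → ℝ → ℝ)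
    (hcont : ∀ m, Continuous (g m))
    (hanti : ∀ m, Antitone (g m)) :
    StrictConvexOn ℝ Set.univ
      (fun η : Fin n → ℝ =>
        (1 / 2) * (η ⬝ᵥ A.mulVec η) - (∑ m, ∫ s in (0 : ℝ)..(η m), g m s) - b ⬝ᵥ η) := by
  have hquad := hA.strictConvexOn_dotProduct_mulVec.const_mul (one_half_pos (α := ℝ))
  have hprimitives : ConcaveOn ℝ univ fun η : Fin n → ℝ => ∑ m, ∫ s in (0 : ℝ)..(η m), g m s :=
    ConcaveOn.sum convex_univ fun m _ =>
      ((hanti m).concaveOn_intervalIntegral (hcont m) 0).comp_linearMap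
        (LinearMap.proj (R := ℝ) (φ := fun _ => ℝ) m)
  have hlinear : ConcaveOn ℝ univ fun η : Fin n → ℝ => b ⬝ᵥ η :=
    (dotProductBilin ℝ ℝ b).concaveOn convex_univ
  exact (hquad.sub_concaveOn hprimitives).sub_concaveOn hlinear

/-- convexity of the discrete energy: with `A` symmetric positive
definite and each `g_m` continuous and nonincreasing, the energy
`E(η) = ½ ηᵀAη − ∑ m, ∫₀^{η_m} g_m(s) ds − bᵀη` is strictly convex on `ℝⁿ`. -/
theorem discrete_energy_strictConvex
    (n : ℕ) (hn : 1 ≤ n) (A : Matrix (Fin n) (Fin n) ℝ) (hA : A.PosDef)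
    (b : Fin n → ℝ) (g : Fin n → ℝ → ℝ)
    (hcont : ∀ m, Continuous (g m))
    (hanti : ∀ m, Antitone (g m)) :
    StrictConvexOn ℝ Set.univ
      (fun η : Fin n → ℝ =>
        (1 / 2) * (η ⬝ᵥ A.mulVec η) - (∑ m, ∫ s in (0 : ℝ)..(η m), g m s) - b ⬝ᵥ η) :=
  discrete_energy_strictConvex_general n A hA b g hcont hanti
end

section
/- (Lemma 3.7, existence of an admissible stepsize.) Let n ≥ 1 and let F : ℝⁿ → ℝⁿ be differentiable with Fréchet derivative F′ Lipschitz continuous with constant L > 0 in the operator norm. Let ψ ∈ ℝⁿ with F′(ψ) invertible and F(ψ) ≠ 0. Then for every stepsize ω with 0 < ω ≤ min(1, 2‖F(ψ)‖ / (L‖F′(ψ)⁻¹F(ψ)‖²)), the damped Newton iterate ψ̄ = ψ − ω F′(ψ)⁻¹ F(ψ) satisfies ‖F(ψ̄)‖ ≤ ‖F(ψ)‖. -/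
/-!
A Lipschitz derivative bounds the Taylor remainder quadratically,
`‖F (x + h) - F x - F′(x) h‖ ≤ L/2 ‖h‖²`. Along the Newton direction `d = F′(ψ)⁻¹ F(ψ)` the
linearisation of `F (ψ - ω d)` is `(1 - ω) F(ψ)`, so the damped step has residual at most
`(1 - ω) ‖F ψ‖ + L/2 ω² ‖d‖²`, and the stepsize bound makes the quadratic term at most `ω ‖F ψ‖`.
-/

open Set

variable {E G : Type*} [NormedAddCommGroup E] [NormedSpace ℝ E]
  [NormedAddCommGroup G] [NormedSpace ℝ G]

theorem norm_sub_sub_fderiv_apply_le_of_lipschitz_fderiv {f : E → G} {L : ℝ}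
    (hf : Differentiable ℝ f)
    (hLip : ∀ u v : E, ‖fderiv ℝ f u - fderiv ℝ f v‖ ≤ L * ‖u - v‖) (x h : E) :
    ‖f (x + h) - f x - fderiv ℝ f x h‖ ≤ L / 2 * ‖h‖ ^ 2 := by
  set g : ℝ → G := fun t => f (x + t • h) - f x - t • fderiv ℝ f x h
  have hg : ∀ t, HasDerivAt g (fderiv ℝ f (x + t • h) h - fderiv ℝ f x h) t := by
    intro t
    have hline : HasDerivAt (fun t : ℝ => x + t • h) h t := by
      simpa using ((hasDerivAt_id t).smul_const h).const_add x
    have := (((hf _).hasFDerivAt.comp_hasDerivAt t hline).sub_const (f x)).sub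
      ((hasDerivAt_id t).smul_const (fderiv ℝ f x h))
    rwa [one_smul] at this
  have hbound : ∀ t ∈ Ico (0 : ℝ) 1,
      ‖fderiv ℝ f (x + t • h) h - fderiv ℝ f x h‖ ≤ L * ‖h‖ ^ 2 * t := by
    rintro t ⟨ht0, -⟩
    calc ‖fderiv ℝ f (x + t • h) h - fderiv ℝ f x h‖
        = ‖(fderiv ℝ f (x + t • h) - fderiv ℝ f x) h‖ := rfl
      _ ≤ ‖fderiv ℝ f (x + t • h) - fderiv ℝ f x‖ * ‖h‖ := ContinuousLinearMap.le_opNorm _ _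
      _ ≤ L * ‖t • h‖ * ‖h‖ := by gcongr; simpa using hLip (x + t • h) x
      _ = L * ‖h‖ ^ 2 * t := by rw [norm_smul, Real.norm_of_nonneg ht0]; ring
  have hB : ∀ t : ℝ, HasDerivAt (fun t => L / 2 * ‖h‖ ^ 2 * t ^ 2) (L * ‖h‖ ^ 2 * t) t :=
    fun t => ((hasDerivAt_pow 2 t).const_mul (L / 2 * ‖h‖ ^ 2)).congr_deriv (by norm_num; ring)
  simpa [g] using image_norm_le_of_norm_deriv_right_le_deriv_boundary
    (fun t _ => (hg t).continuousAt.continuousWithinAt) (fun t _ => (hg t).hasDerivWithinAt)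
    (by simp [g]) hB hbound (right_mem_Icc.2 zero_le_one)

theorem norm_damped_newton_step_le {f : E → G} {L : ℝ} (hf : Differentiable ℝ f)
    (hLip : ∀ u v : E, ‖fderiv ℝ f u - fderiv ℝ f v‖ ≤ L * ‖u - v‖) {x d : E}
    (hd : fderiv ℝ f x d = f x) {ω : ℝ} (hω0 : 0 ≤ ω) (hω1 : ω ≤ 1) :
    ‖f (x - ω • d)‖ ≤ (1 - ω) * ‖f x‖ + L / 2 * ω ^ 2 * ‖d‖ ^ 2 := by
  have hlin : f x + fderiv ℝ f x (-(ω • d)) = (1 - ω) • f x := by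
    rw [map_neg, map_smul, hd, sub_smul, one_smul, sub_eq_add_neg]
  have hsplit : f (x - ω • d) =
      (f (x + -(ω • d)) - f x - fderiv ℝ f x (-(ω • d))) + (1 - ω) • f x := by
    rw [← hlin, ← sub_eq_add_neg]; abel
  calc ‖f (x - ω • d)‖
      ≤ ‖f (x + -(ω • d)) - f x - fderiv ℝ f x (-(ω • d))‖ + ‖(1 - ω) • f x‖ := by
        rw [hsplit]; exact norm_add_le _ _
    _ ≤ L / 2 * ‖-(ω • d)‖ ^ 2 + (1 - ω) * ‖f x‖ := by
        rw [norm_smul, Real.norm_of_nonneg (sub_nonneg.2 hω1)]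
        gcongr
        exact norm_sub_sub_fderiv_apply_le_of_lipschitz_fderiv hf hLip x _
    _ = (1 - ω) * ‖f x‖ + L / 2 * ω ^ 2 * ‖d‖ ^ 2 := by
        rw [norm_neg, norm_smul, Real.norm_of_nonneg hω0]; ring

theorem admissible_stepsize_exists_general
    (n : ℕ) (L : ℝ) (hL : 0 < L)
    (F : EuclideanSpace ℝ (Fin n) → EuclideanSpace ℝ (Fin n))
    (hF : Differentiable ℝ F)
    (hLip : ∀ u v : EuclideanSpace ℝ (Fin n),
      ‖fderiv ℝ F u - fderiv ℝ F v‖ ≤ L * ‖u - v‖)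
    (ψ : EuclideanSpace ℝ (Fin n))
    (Φ : EuclideanSpace ℝ (Fin n) ≃L[ℝ] EuclideanSpace ℝ (Fin n))
    (hΦ : (Φ : EuclideanSpace ℝ (Fin n) →L[ℝ] EuclideanSpace ℝ (Fin n)) = fderiv ℝ F ψ) :
    ∀ ω : ℝ, 0 < ω →
      ω ≤ min 1 (2 * ‖F ψ‖ / (L * ‖Φ.symm (F ψ)‖ ^ 2)) →
      ‖F (ψ - ω • Φ.symm (F ψ))‖ ≤ ‖F ψ‖ := by
  intro ω hω hωle
  obtain ⟨hω1, hω2⟩ := le_min_iff.mp hωle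
  set d := Φ.symm (F ψ)
  have hd : fderiv ℝ F ψ d = F ψ := by rw [← hΦ]; exact Φ.apply_symm_apply _
  have hcurv : ω * (L * ‖d‖ ^ 2) ≤ 2 * ‖F ψ‖ :=
    mul_le_of_le_div₀ (by positivity) (by positivity) hω2
  calc ‖F (ψ - ω • d)‖ ≤ (1 - ω) * ‖F ψ‖ + L / 2 * ω ^ 2 * ‖d‖ ^ 2 :=
        norm_damped_newton_step_le hF hLip hd hω.le hω1
    _ ≤ ‖F ψ‖ := by nlinarith [mul_le_mul_of_nonneg_left hcurv hω.le]

/-- Lemma 3.7, existence of an admissible stepsize: if `F′` is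
`L`-Lipschitz, `F′(ψ)` is invertible, and `F(ψ) ≠ 0`, then every stepsize
`0 < ω ≤ min(1, 2‖F(ψ)‖/(L‖F′(ψ)⁻¹F(ψ)‖²))` yields
`‖F(ψ − ω F′(ψ)⁻¹F(ψ))‖ ≤ ‖F(ψ)‖`. -/
theorem admissible_stepsize_exists
    (n : ℕ) (hn : 1 ≤ n) (L : ℝ) (hL : 0 < L)
    (F : EuclideanSpace ℝ (Fin n) → EuclideanSpace ℝ (Fin n))
    (hF : Differentiable ℝ F)
    (hLip : ∀ u v : EuclideanSpace ℝ (Fin n),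
      ‖fderiv ℝ F u - fderiv ℝ F v‖ ≤ L * ‖u - v‖)
    (ψ : EuclideanSpace ℝ (Fin n))
    (Φ : EuclideanSpace ℝ (Fin n) ≃L[ℝ] EuclideanSpace ℝ (Fin n))
    (hΦ : (Φ : EuclideanSpace ℝ (Fin n) →L[ℝ] EuclideanSpace ℝ (Fin n)) = fderiv ℝ F ψ)
    (hFψ : F ψ ≠ 0) :
    ∀ ω : ℝ, 0 < ω →
      ω ≤ min 1 (2 * ‖F ψ‖ / (L * ‖Φ.symm (F ψ)‖ ^ 2)) →
      ‖F (ψ - ω • Φ.symm (F ψ))‖ ≤ ‖F ψ‖ :=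
  admissible_stepsize_exists_general n L hL F hF hLip ψ Φ hΦ
end
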